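/- arXiv:2211.06616 — 6 statements merged into one kernel-verified Lean document; each statement's English description precedes it below -/
import Mathlib

section
/- Let n ≥ 2 and let a, b : ℝ → EuclideanSpace ℝ (Fin n) be smooth curves parametrized by arc length, i.e. ‖a'(s)‖ = 1 and ‖b'(t)‖ = 1 for all s, t ∈ ℝ. Let u : ℝ × ℝ → ℝ be a smooth function with 0 < u(s,t) < π and cos(u(s,t)) = ⟪a'(s), b'(t)⟫ for all (s,t) (so u is the angle between the coordinate vector fields of the regular translation surface f(s,t) = a(s) + b(t)). If there is a real constant K such that ∂²u/∂t∂s (s,t) = −K · sin(u(s,t)) for all (s,t), then K = 0. -/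
open scoped RealInnerProductSpace

lemma aux_inner_sq {n : ℕ} (v1 v2 β : EuclideanSpace ℝ (Fin n))
    (h1 : ‖v1‖ = 1) (h2 : ‖v2‖ = 1) (hβ : ‖β‖ = 1) :
    ⟪v1, β⟫ ^ 2 + ⟪v2, β⟫ ^ 2 ≤ 1 + |⟪v1, v2⟫| := by
  set x := ⟪v1, β⟫ with hx
  set y := ⟪v2, β⟫ with hy
  set c := ⟪v1, v2⟫ with hc
  have hCS : |⟪x • v1 + y • v2, β⟫| ≤ ‖x • v1 + y • v2‖ * ‖β‖ := abs_real_inner_le_norm _ _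
  have hval : ⟪x • v1 + y • v2, β⟫ = x ^ 2 + y ^ 2 := by
    rw [inner_add_left, real_inner_smul_left, real_inner_smul_left, ← hx, ← hy]; ring
  have hnorm : ‖x • v1 + y • v2‖ ^ 2 = x ^ 2 + y ^ 2 + 2 * x * y * c := by
    rw [← real_inner_self_eq_norm_sq]
    simp only [inner_add_left, inner_add_right, real_inner_smul_left, real_inner_smul_right,
      real_inner_self_eq_norm_sq, h1, h2, real_inner_comm v2 v1, norm_smul, mul_pow, sq_abs,
      Real.norm_eq_abs, mul_one, one_pow, ← hc]
    have hcc : (inner ℝ v2 v1 : ℝ) = c := by rw [real_inner_comm]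
    rw [hcc]
    ring
  have hc1 : |c| ≤ 1 := by
    have := abs_real_inner_le_norm v1 v2; rwa [h1, h2, one_mul] at this
  have hsq : (x ^ 2 + y ^ 2) ^ 2 ≤ x ^ 2 + y ^ 2 + 2 * x * y * c := by
    have h := hCS
    rw [hval, hβ, mul_one] at h
    have h' : x ^ 2 + y ^ 2 ≤ ‖x • v1 + y • v2‖ := le_trans (le_abs_self _) h
    have := pow_le_pow_left₀ (by positivity) h' 2
    calc (x ^ 2 + y ^ 2) ^ 2 ≤ ‖x • v1 + y • v2‖ ^ 2 := this
    _ = _ := hnorm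
  have habs : 2 * x * y * c ≤ (x ^ 2 + y ^ 2) * |c| := by
    rcases abs_cases c with ⟨h, _⟩ | ⟨h, _⟩ <;> nlinarith [sq_nonneg (x - y), sq_nonneg (x + y)]
  nlinarith [sq_nonneg (x ^ 2 + y ^ 2), abs_nonneg c, sq_nonneg (x^2+y^2 - 1 - |c|)]

/-- Theorem 1 of the paper for `G = ℝⁿ`: a translation surface
`f(s,t) = a(s) + b(t)` in Euclidean space (with `a, b` smooth arc-length parametrized
curves and angle function `u(s,t) ∈ (0,π)` given by `cos u = ⟪a'(s), b'(t)⟫`) of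
constant Gaussian curvature `K` (i.e. `u_{st} = −K sin u`) is flat: `K = 0`. -/
theorem stmt_0 (n : ℕ) (hn : 2 ≤ n)
    (a b : ℝ → EuclideanSpace ℝ (Fin n))
    (ha : ContDiff ℝ (⊤ : ℕ∞) a) (hb : ContDiff ℝ (⊤ : ℕ∞) b)
    (ha' : ∀ s : ℝ, ‖deriv a s‖ = 1) (hb' : ∀ t : ℝ, ‖deriv b t‖ = 1)
    (u : ℝ × ℝ → ℝ) (hu : ContDiff ℝ (⊤ : ℕ∞) u)
    (hrange : ∀ s t : ℝ, u (s, t) ∈ Set.Ioo (0 : ℝ) Real.pi)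
    (hangle : ∀ s t : ℝ, Real.cos (u (s, t)) = ⟪deriv a s, deriv b t⟫)
    (K : ℝ)
    (hcurv : ∀ s t : ℝ,
      deriv (fun t' => deriv (fun s' => u (s', t')) s) t = -K * Real.sin (u (s, t))) :
    K = 0 := by
  by_contra hK0
  have hαc : Continuous (deriv a) := ha.continuous_deriv (by simp)
  have hsin : ∀ s t : ℝ, 0 < Real.sin (u (s, t)) :=
    fun s t => Real.sin_pos_of_pos_of_lt_pi (hrange s t).1 (hrange s t).2
  by_cases hcase : ∃ s1 s2 : ℝ, |⟪deriv a s1, deriv a s2⟫| < 1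
  · -- main case
    obtain ⟨s1, s2, hlt⟩ := hcase
    -- partial derivative machinery
    set D : ℝ × ℝ → ℝ := fun p => fderiv ℝ u p (1, 0) with hD
    have hDsm : ContDiff ℝ (⊤ : ℕ∞) D := (hu.fderiv_right (by simp)).clm_apply contDiff_const
    have hDc : Continuous D := hDsm.continuous
    have hpart : ∀ s t : ℝ, HasDerivAt (fun s' => u (s', t)) (D (s, t)) s := by
      intro s t
      have hline : HasDerivAt (fun s' : ℝ => (s', t)) ((1 : ℝ), (0 : ℝ)) s :=
        HasDerivAt.prodMk (hasDerivAt_id s) (hasDerivAt_const s t)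
      exact ((hu.differentiable (by simp) (s, t)).hasFDerivAt).comp_hasDerivAt s hline
    have hderiv_eq : ∀ s t : ℝ, deriv (fun s' => u (s', t)) s = D (s, t) :=
      fun s t => (hpart s t).deriv
    -- FTC in t
    have hFTCt : ∀ s T : ℝ,
        (∫ t in (0:ℝ)..T, -K * Real.sin (u (s, t))) = D (s, T) - D (s, 0) := by
      intro s T
      have hDs : ContDiff ℝ (⊤ : ℕ∞) (fun t' : ℝ => D (s, t')) :=
        hDsm.comp (contDiff_const.prodMk contDiff_id)
      have heq : (fun t' => deriv (fun s' => u (s', t')) s) = fun t' => D (s, t') := by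
        funext t'; exact hderiv_eq s t'
      have hder : deriv (fun t' : ℝ => D (s, t')) = fun t => -K * Real.sin (u (s, t)) := by
        funext t
        have := hcurv s t
        rwa [heq] at this
      have := intervalIntegral.integral_deriv_eq_sub' (a := (0:ℝ)) (b := T)
        (f := fun t' : ℝ => D (s, t'))
        (f' := fun t => -K * Real.sin (u (s, t))) hder
        (fun x _ => (hDs.differentiable (by simp)).differentiableAt)
        (Continuous.continuousOn (continuous_const.mul
          (Real.continuous_sin.comp (hu.continuous.comp (Continuous.prodMk_right s)))))
      rw [this]
    -- define inner integral G
    set GG : ℝ → ℝ → ℝ := fun T s => ∫ t in (0:ℝ)..T, Real.sin (u (s, t)) with hGG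
    have hGval : ∀ T s : ℝ, -K * GG T s = D (s, T) - D (s, 0) := by
      intro T s
      rw [hGG]
      rw [← intervalIntegral.integral_const_mul]
      exact hFTCt s T
    have hGfun : ∀ T : ℝ, GG T = fun s => (D (s, T) - D (s, 0)) / (-K) := by
      intro T
      funext s
      rw [← hGval T s]
      field_simp
    have hGcont : ∀ T : ℝ, Continuous (GG T) := by
      intro T
      rw [hGfun T]
      exact ((hDc.comp (continuous_id.prodMk continuous_const)).sub
        (hDc.comp (continuous_id.prodMk continuous_const))).div_const _
    -- FTC in s : rectangle identity
    have hrect : ∀ T p q : ℝ, -K * ∫ s in p..q, GG T s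
        = (u (q, T) - u (q, 0)) - (u (p, T) - u (p, 0)) := by
      intro T p q
      have hψ : ∀ s ∈ Set.uIcc p q, HasDerivAt (fun s' => u (s', T) - u (s', 0))
          (D (s, T) - D (s, 0)) s := fun s _ => (hpart s T).sub (hpart s 0)
      have hint : IntervalIntegrable (fun s => D (s, T) - D (s, 0))
          MeasureTheory.volume p q :=
        (((hDc.comp (continuous_id.prodMk continuous_const)).sub
          (hDc.comp (continuous_id.prodMk continuous_const)))).intervalIntegrable p q
      have := intervalIntegral.integral_eq_sub_of_hasDerivAt hψ hint
      rw [← intervalIntegral.integral_const_mul]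
      calc (∫ s in p..q, -K * GG T s) = ∫ s in p..q, (D (s, T) - D (s, 0)) := by
            congr 1; funext s; exact hGval T s
        _ = _ := this
    have hπ : ∀ s t t' : ℝ, |u (s, t) - u (s, t')| ≤ Real.pi := by
      intro s t t'
      have h1 := hrange s t
      have h2 := hrange s t'
      rw [abs_le]
      constructor <;> [linarith [h1.1, h2.2]; linarith [h1.2, h2.1]]
    have hbound : ∀ T p q : ℝ, |K| * |∫ s in p..q, GG T s| ≤ 2 * Real.pi := by
      intro T p q
      have := hrect T p q
      have habs : |(-K) * ∫ s in p..q, GG T s| ≤ 2 * Real.pi := by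
        rw [this]
        calc |(u (q, T) - u (q, 0)) - (u (p, T) - u (p, 0))|
            ≤ |u (q, T) - u (q, 0)| + |u (p, T) - u (p, 0)| := abs_sub _ _
          _ ≤ Real.pi + Real.pi := add_le_add (hπ q T 0) (hπ p T 0)
          _ = 2 * Real.pi := by ring
      rwa [abs_mul, abs_neg] at habs
    -- geometric lower bound
    set c0 : ℝ := |⟪deriv a s1, deriv a s2⟫| with hc0
    set c : ℝ := (1 - c0) / 2 with hcdef
    have hc0nn : 0 ≤ c0 := abs_nonneg _
    have hcpos : 0 < c := by rw [hcdef]; linarith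
    have hf : Continuous fun r : ℝ => |⟪deriv a (s1 + r), deriv a (s2 + r)⟫| :=
      continuous_abs.comp ((hαc.comp (continuous_const.add continuous_id)).inner
        (hαc.comp (continuous_const.add continuous_id)))
    obtain ⟨δ, hδpos, hδ⟩ := Metric.continuousAt_iff.mp hf.continuousAt c hcpos
    set δ' : ℝ := δ / 2 with hδ'def
    have hδ'pos : 0 < δ' := by rw [hδ'def]; linarith
    have hfr : ∀ r : ℝ, |r| ≤ δ' → |⟪deriv a (s1 + r), deriv a (s2 + r)⟫| < 1 - c := by
      intro r hr
      have hdist : dist r 0 < δ := by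
        rw [Real.dist_eq, sub_zero]
        calc |r| ≤ δ' := hr
          _ < δ := by rw [hδ'def]; linarith
      have h1 := hδ hdist
      rw [Real.dist_eq] at h1
      have h0 : |⟪deriv a (s1 + 0), deriv a (s2 + 0)⟫| = c0 := by
        rw [add_zero, add_zero]
      rw [h0] at h1
      have h3 : |⟪deriv a (s1 + r), deriv a (s2 + r)⟫| - c0 < c :=
        lt_of_le_of_lt (le_abs_self _) h1
      rw [hcdef] at h3 ⊢
      linarith
    have hlow : ∀ r t : ℝ, |r| ≤ δ' →
        Real.sqrt c ≤ Real.sin (u (s1 + r, t)) + Real.sin (u (s2 + r, t)) := by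
      intro r t hr
      have hx : Real.cos (u (s1 + r, t)) = ⟪deriv a (s1 + r), deriv b t⟫ := hangle _ t
      have hy : Real.cos (u (s2 + r, t)) = ⟪deriv a (s2 + r), deriv b t⟫ := hangle _ t
      have hineq := aux_inner_sq (deriv a (s1 + r)) (deriv a (s2 + r)) (deriv b t)
        (ha' _) (ha' _) (hb' t)
      rw [← hx, ← hy] at hineq
      have hfrr := hfr r hr
      have hs1 := Real.sin_sq_add_cos_sq (u (s1 + r, t))
      have hs2 := Real.sin_sq_add_cos_sq (u (s2 + r, t))
      have hsum : c ≤ Real.sin (u (s1 + r, t)) ^ 2 + Real.sin (u (s2 + r, t)) ^ 2 := by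
        nlinarith
      have hnn1 : 0 ≤ Real.sin (u (s1 + r, t)) := (hsin _ t).le
      have hnn2 : 0 ≤ Real.sin (u (s2 + r, t)) := (hsin _ t).le
      have hsq : c ≤ (Real.sin (u (s1 + r, t)) + Real.sin (u (s2 + r, t))) ^ 2 := by
        nlinarith
      calc Real.sqrt c ≤ Real.sqrt ((Real.sin (u (s1 + r, t)) + Real.sin (u (s2 + r, t))) ^ 2) :=
            Real.sqrt_le_sqrt hsq
        _ = Real.sin (u (s1 + r, t)) + Real.sin (u (s2 + r, t)) := by
            rw [Real.sqrt_sq (by positivity)]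
    -- choose T
    have hsqc : 0 < Real.sqrt c := Real.sqrt_pos.mpr hcpos
    have hKpos : 0 < |K| := abs_pos.mpr hK0
    set T : ℝ := (2 * (2 * Real.pi) / |K| + 1) / (Real.sqrt c * (2 * δ')) with hTdef
    have hTpos : 0 < T := by
      rw [hTdef]
      have hπpos := Real.pi_pos
      positivity
    -- lower bound on inner integrals
    have hinner : ∀ r : ℝ, |r| ≤ δ' → T * Real.sqrt c ≤ GG T (s1 + r) + GG T (s2 + r) := by
      intro r hr
      have hcont1 : Continuous fun t => Real.sin (u (s1 + r, t)) :=
        Real.continuous_sin.comp (hu.continuous.comp (Continuous.prodMk_right _))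
      have hcont2 : Continuous fun t => Real.sin (u (s2 + r, t)) :=
        Real.continuous_sin.comp (hu.continuous.comp (Continuous.prodMk_right _))
      have hadd : GG T (s1 + r) + GG T (s2 + r)
          = ∫ t in (0:ℝ)..T, (Real.sin (u (s1 + r, t)) + Real.sin (u (s2 + r, t))) := by
        rw [hGG]
        rw [intervalIntegral.integral_add (hcont1.intervalIntegrable 0 T)
          (hcont2.intervalIntegrable 0 T)]
      rw [hadd]
      have hmono := intervalIntegral.integral_mono_on (μ := MeasureTheory.volume) (a := (0:ℝ)) (b := T)
        (f := fun _ => Real.sqrt c)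
        (g := fun t => Real.sin (u (s1 + r, t)) + Real.sin (u (s2 + r, t)))
        hTpos.le (continuous_const.intervalIntegrable 0 T)
        ((hcont1.add hcont2).intervalIntegrable 0 T)
        (fun t _ => hlow r t hr)
      calc T * Real.sqrt c = ∫ _ in (0:ℝ)..T, Real.sqrt c := by
            simp [intervalIntegral.integral_const, smul_eq_mul]
        _ ≤ _ := hmono
    -- outer integral
    have houter : 2 * δ' * (T * Real.sqrt c)
        ≤ (∫ s in (s1 - δ')..(s1 + δ'), GG T s) + ∫ s in (s2 - δ')..(s2 + δ'), GG T s := by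
      have hΦc : Continuous fun r => GG T (s1 + r) + GG T (s2 + r) :=
        ((hGcont T).comp (continuous_const.add continuous_id)).add
          ((hGcont T).comp (continuous_const.add continuous_id))
      have hmono := intervalIntegral.integral_mono_on (μ := MeasureTheory.volume) (a := -δ') (b := δ')
        (f := fun _ => T * Real.sqrt c)
        (g := fun r => GG T (s1 + r) + GG T (s2 + r))
        (by linarith) (continuous_const.intervalIntegrable _ _)
        (hΦc.intervalIntegrable _ _)
        (fun r hrIcc => hinner r (abs_le.mpr ⟨hrIcc.1, hrIcc.2⟩))
      have hsplit : (∫ r in (-δ')..δ', (GG T (s1 + r) + GG T (s2 + r)))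
          = (∫ s in (s1 - δ')..(s1 + δ'), GG T s) + ∫ s in (s2 - δ')..(s2 + δ'), GG T s := by
        have h1c : Continuous fun r : ℝ => GG T (s1 + r) :=
          (hGcont T).comp (continuous_const.add continuous_id)
        have h2c : Continuous fun r : ℝ => GG T (s2 + r) :=
          (hGcont T).comp (continuous_const.add continuous_id)
        rw [intervalIntegral.integral_add (h1c.intervalIntegrable _ _)
          (h2c.intervalIntegrable _ _)]
        have h1 : (∫ r in (-δ')..δ', GG T (s1 + r)) = ∫ s in (s1 - δ')..(s1 + δ'), GG T s := by
          have : (fun r => GG T (s1 + r)) = fun r => GG T (r + s1) := by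
            funext r; rw [add_comm]
          rw [this, intervalIntegral.integral_comp_add_right (fun s => GG T s) s1]
          congr 1 <;> ring
        have h2 : (∫ r in (-δ')..δ', GG T (s2 + r)) = ∫ s in (s2 - δ')..(s2 + δ'), GG T s := by
          have : (fun r => GG T (s2 + r)) = fun r => GG T (r + s2) := by
            funext r; rw [add_comm]
          rw [this, intervalIntegral.integral_comp_add_right (fun s => GG T s) s2]
          congr 1 <;> ring
        rw [h1, h2]
      rw [← hsplit]
      calc 2 * δ' * (T * Real.sqrt c) = ∫ _ in (-δ')..δ', T * Real.sqrt c := by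
            simp [intervalIntegral.integral_const, smul_eq_mul]; ring
        _ ≤ _ := hmono
    -- upper bounds
    have hup : ∀ p q : ℝ, (∫ s in p..q, GG T s) ≤ 2 * Real.pi / |K| := by
      intro p q
      have h := hbound T p q
      have h2 : |∫ s in p..q, GG T s| ≤ 2 * Real.pi / |K| := by
        rw [le_div_iff₀ hKpos]
        linarith [h]
      exact le_trans (le_abs_self _) h2
    have hfinal : 2 * δ' * (T * Real.sqrt c) ≤ 2 * (2 * Real.pi) / |K| := by
      calc 2 * δ' * (T * Real.sqrt c) ≤ _ := houter
        _ ≤ 2 * Real.pi / |K| + 2 * Real.pi / |K| :=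
            add_le_add (hup _ _) (hup _ _)
        _ = 2 * (2 * Real.pi) / |K| := by ring
    have hTval : 2 * δ' * (T * Real.sqrt c) = 2 * (2 * Real.pi) / |K| + 1 := by
      rw [hTdef]
      field_simp
    rw [hTval] at hfinal
    linarith
  · -- degenerate case: the curve a has constant unit tangent
    push_neg at hcase
    have hone : ∀ s : ℝ, ⟪deriv a 0, deriv a s⟫ = 1 := by
      have habs1 : ∀ s : ℝ, |⟪deriv a 0, deriv a s⟫| = 1 := by
        intro s
        have hle : |⟪deriv a 0, deriv a s⟫| ≤ 1 := by
          have := abs_real_inner_le_norm (deriv a 0) (deriv a s)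
          rwa [ha' 0, ha' s, one_mul] at this
        exact le_antisymm hle (hcase 0 s)
      intro s
      by_contra hne
      have hval : ⟪deriv a 0, deriv a s⟫ = -1 := by
        rcases abs_eq (by norm_num : (0:ℝ) ≤ 1) |>.mp (habs1 s) with h | h
        · exact absurd h hne
        · exact h
      -- continuity and IVT give an intermediate value with |inner| < 1
      have hcont : Continuous fun s' => ⟪deriv a 0, deriv a s'⟫ :=
        continuous_const.inner hαc
      have h0 : ⟪deriv a 0, deriv a 0⟫ = 1 := by
        have := real_inner_self_eq_norm_sq (deriv a 0)
        rw [ha' 0] at this; simpa using this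
      have hIVT : (0:ℝ) ∈ Set.uIcc (⟪deriv a 0, deriv a 0⟫) (⟪deriv a 0, deriv a s⟫) := by
        rw [h0, hval]
        rw [Set.uIcc_of_ge (by norm_num)]
        constructor <;> norm_num
      obtain ⟨s', _, hs'⟩ := intermediate_value_uIcc (f := fun s' => ⟪deriv a 0, deriv a s'⟫)
        (a := 0) (b := s) (hcont.continuousOn) hIVT
      have hs'' : ⟪deriv a 0, deriv a s'⟫ = 0 := hs'
      have := habs1 s'
      rw [hs''] at this
      norm_num at this
    have hconst : ∀ s : ℝ, deriv a s = deriv a 0 :=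
      fun s => ((inner_eq_one_iff_of_norm_eq_one (ha' 0) (ha' s)).mp (hone s)).symm
    have huconst : ∀ s t : ℝ, u (s, t) = u (0, t) := by
      intro s t
      have hcos : Real.cos (u (s, t)) = Real.cos (u (0, t)) := by
        rw [hangle s t, hangle 0 t, hconst s]
      exact Real.injOn_cos ⟨(hrange s t).1.le, (hrange s t).2.le⟩
        ⟨(hrange 0 t).1.le, (hrange 0 t).2.le⟩ hcos
    have hzero : (0:ℝ) = -K * Real.sin (u (0, 0)) := by
      have h1 : (fun t' => deriv (fun s' => u (s', t')) 0) = fun _ => (0:ℝ) := by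
        funext t'
        have : (fun s' => u (s', t')) = fun _ => u (0, t') := funext fun s' => huconst s' t'
        rw [this, deriv_const]
      have := hcurv 0 0
      rw [h1] at this
      rw [← this, deriv_const]
    have := hsin 0 0
    apply hK0
    have : -K * Real.sin (u (0, 0)) = 0 := hzero.symm
    rcases mul_eq_zero.mp this with h | h
    · linarith [neg_eq_zero.mp h]
    · exact absurd h (ne_of_gt (hsin 0 0))
end

section
/- Let a, b : ℝ → ℍ (the real quaternions) be smooth curves with ‖a(s)‖ = 1 and ‖b(t)‖ = 1 for all s, t (so a and b take values in the Lie group of unit quaternions S³), parametrized by arc length, i.e. ‖a'(s)‖ = 1 and ‖b'(t)‖ = 1 for all s, t. Let u : ℝ × ℝ → ℝ be a smooth function with 0 < u(s,t) < π and cos(u(s,t)) = re( (a'(s) * b(t)) * star(a(s) * b'(t)) ) for all (s,t) (so u is the angle between the coordinate vector fields f_s = a'(s)·b(t) and f_t = a(s)·b'(t) of the regular translation surface f(s,t) = a(s)·b(t)). If there is a real constant K such that ∂²u/∂t∂s (s,t) = −K · sin(u(s,t)) for all (s,t), then K = 0. -/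
open Quaternion
open RealInnerProductSpace

instance : StarModule ℝ ℍ[ℝ] := ⟨fun r x => Quaternion.star_smul r x⟩

/-- Theorem 1 of the paper for `G = S³` (unit quaternions): a translation surface
`f(s,t) = a(s)·b(t)` in the group of unit quaternions (with `a, b` smooth arc-length
parametrized curves in `S³` and angle function `u(s,t) ∈ (0,π)` given by
`cos u = re(f_s · star f_t)` where `f_s = a'(s)·b(t)` and `f_t = a(s)·b'(t)`) of
constant Gaussian curvature `K` (i.e. `u_{st} = −K sin u`) is flat: `K = 0`. -/
theorem stmt_1 (a b : ℝ → ℍ[ℝ])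
    (ha : ContDiff ℝ (⊤ : ℕ∞) a) (hb : ContDiff ℝ (⊤ : ℕ∞) b)
    (haS : ∀ s : ℝ, ‖a s‖ = 1) (hbS : ∀ t : ℝ, ‖b t‖ = 1)
    (ha' : ∀ s : ℝ, ‖deriv a s‖ = 1) (hb' : ∀ t : ℝ, ‖deriv b t‖ = 1)
    (u : ℝ × ℝ → ℝ) (hu : ContDiff ℝ (⊤ : ℕ∞) u)
    (hrange : ∀ s t : ℝ, u (s, t) ∈ Set.Ioo (0 : ℝ) Real.pi)
    (hangle : ∀ s t : ℝ,
      Real.cos (u (s, t)) = ((deriv a s * b t) * star (a s * deriv b t)).re)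
    (K : ℝ)
    (hcurv : ∀ s t : ℝ,
      deriv (fun t' => deriv (fun s' => u (s', t')) s) t = -K * Real.sin (u (s, t))) :
    K = 0 := by
  by_contra hK
  have ha2 : ContDiff ℝ (⊤ : ℕ∞) a := ha.of_le (by simp)
  have hb2 : ContDiff ℝ (⊤ : ℕ∞) b := hb.of_le (by simp)
  have hu2 : ContDiff ℝ (⊤ : ℕ∞) u := hu.of_le (by simp)
  have hucont : Continuous u := hu2.continuous
  set A : ℝ → ℍ[ℝ] := fun s => star (a s) * deriv a s with hAdef
  set B : ℝ → ℍ[ℝ] := fun t => deriv b t * star (b t) with hBdef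
  have hA : ContDiff ℝ (⊤ : ℕ∞) A :=
    (((starL ℝ : ℍ[ℝ] ≃L[ℝ] ℍ[ℝ]).toContinuousLinearMap.contDiff).comp ha2).mul
      (contDiff_infty_iff_deriv.mp ha2).2
  have hB : ContDiff ℝ (⊤ : ℕ∞) B :=
    ((contDiff_infty_iff_deriv.mp hb2).2).mul
      (((starL ℝ : ℍ[ℝ] ≃L[ℝ] ℍ[ℝ]).toContinuousLinearMap.contDiff).comp hb2)
  have hAdiff : Differentiable ℝ A := hA.differentiable (by norm_num)
  have hBdiff : Differentiable ℝ B := hB.differentiable (by norm_num)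
  have hAn : ∀ s, ‖A s‖ = 1 := by
    intro s
    simp only [hAdef]
    rw [norm_mul, Quaternion.norm_star, haS, ha', one_mul]
  have hBn : ∀ t, ‖B t‖ = 1 := by
    intro t
    simp only [hBdef]
    rw [norm_mul, Quaternion.norm_star, hbS, hb', mul_one]
  have cyc : ∀ x y : ℍ[ℝ], (x * y).re = (y * x).re := by
    intro x y; simp [Quaternion.re_mul]; ring
  have hcos : ∀ s t, Real.cos (u (s, t)) = ⟪A s, B t⟫ := by
    intro s t
    rw [hangle, Quaternion.inner_def]
    show ((deriv a s * b t) * star (a s * deriv b t)).re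
        = ((star (a s) * deriv a s) * star (deriv b t * star (b t))).re
    rw [star_mul, star_mul, star_star, ← mul_assoc]
    rw [cyc (deriv a s * b t * star (deriv b t)) (star (a s))]
    simp [mul_assoc]
  have hsin : ∀ s t, 0 < Real.sin (u (s, t)) :=
    fun s t => Real.sin_pos_of_pos_of_lt_pi (hrange s t).1 (hrange s t).2
  -- partial derivatives
  set d1 : ℝ × ℝ → ℝ := fun p => fderiv ℝ u p (1, 0) with hd1def
  have hd1 : ContDiff ℝ (⊤ : ℕ∞) d1 := (hu.fderiv_right (by simp)).clm_apply contDiff_const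
  have hud1 : ∀ s t, HasDerivAt (fun s' => u (s', t)) (d1 (s, t)) s := by
    intro s t
    have h1 : HasFDerivAt u (fderiv ℝ u (s, t)) (s, t) :=
      (hu2.differentiable (by norm_num) (s, t)).hasFDerivAt
    have h2 : HasDerivAt (fun s' : ℝ => (s', t)) ((1 : ℝ), (0 : ℝ)) s :=
      HasDerivAt.prodMk (hasDerivAt_id s) (hasDerivAt_const s t)
    exact h1.comp_hasDerivAt s h2
  have hud2 : ∀ s t, HasDerivAt (fun t' => u (s, t')) (fderiv ℝ u (s, t) (0, 1)) t := by
    intro s t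
    have h1 : HasFDerivAt u (fderiv ℝ u (s, t)) (s, t) :=
      (hu2.differentiable (by norm_num) (s, t)).hasFDerivAt
    have h2 : HasDerivAt (fun t' : ℝ => (s, t')) ((0 : ℝ), (1 : ℝ)) t :=
      HasDerivAt.prodMk (hasDerivAt_const t s) (hasDerivAt_id t)
    exact h1.comp_hasDerivAt t h2
  have hinnert : ∀ s t, HasDerivAt (fun t' => ⟪A s, B t'⟫) ⟪A s, deriv B t⟫ t := by
    intro s t
    simpa using HasDerivAt.inner ℝ (hasDerivAt_const t (A s)) (hBdiff t).hasDerivAt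
  have hinners : ∀ s t, HasDerivAt (fun s' => ⟪A s', B t⟫) ⟪deriv A s, B t⟫ s := by
    intro s t
    simpa using HasDerivAt.inner ℝ (hAdiff s).hasDerivAt (hasDerivAt_const s (B t))
  -- the t-partial derivative of u
  have hut : ∀ s t, HasDerivAt (fun t' => u (s, t'))
      (-⟪A s, deriv B t⟫ / Real.sin (u (s, t))) t := by
    intro s t
    have h2 : HasDerivAt (fun t' => Real.cos (u (s, t')))
        (-Real.sin (u (s, t)) * fderiv ℝ u (s, t) (0, 1)) t := (hud2 s t).cos
    have h3 : (fun t' => Real.cos (u (s, t'))) = fun t' => ⟪A s, B t'⟫ :=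
      funext fun t' => hcos s t'
    rw [h3] at h2
    have h4 : -Real.sin (u (s, t)) * fderiv ℝ u (s, t) (0, 1) = ⟪A s, deriv B t⟫ :=
      h2.unique (hinnert s t)
    have h5 : fderiv ℝ u (s, t) (0, 1) = -⟪A s, deriv B t⟫ / Real.sin (u (s, t)) := by
      rw [eq_div_iff (hsin s t).ne']
      linarith [h4]
    rw [← h5]; exact hud2 s t
  -- the s-partial derivative of u
  have hus : ∀ s t, d1 (s, t) = -⟪deriv A s, B t⟫ / Real.sin (u (s, t)) := by
    intro s t
    have h2 : HasDerivAt (fun s' => Real.cos (u (s', t)))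
        (-Real.sin (u (s, t)) * d1 (s, t)) s := (hud1 s t).cos
    have h3 : (fun s' => Real.cos (u (s', t))) = fun s' => ⟪A s', B t⟫ :=
      funext fun s' => hcos s' t
    rw [h3] at h2
    have h4 : -Real.sin (u (s, t)) * d1 (s, t) = ⟪deriv A s, B t⟫ :=
      h2.unique (hinners s t)
    rw [eq_div_iff (hsin s t).ne']
    linarith [h4]
  have hderiv_eq : ∀ s t', deriv (fun s' => u (s', t')) s = d1 (s, t') :=
    fun s t' => (hud1 s t').deriv
  -- KEY 0 : a zero of `deriv B` forces `K = 0`, contradiction.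
  have key0 : ∀ t₀ : ℝ, deriv B t₀ = 0 → False := by
    intro t₀ h0
    have hfun : (fun t' => deriv (fun s' => u (s', t')) (0 : ℝ))
        = fun t' => -⟪deriv A 0, B t'⟫ / Real.sin (u (0, t')) := by
      funext t'; rw [hderiv_eq 0 t', hus 0 t']
    have hnum : HasDerivAt (fun t' => -⟪deriv A 0, B t'⟫) (-⟪deriv A 0, deriv B t₀⟫) t₀ := by
      simpa [Pi.neg_def] using
        (HasDerivAt.inner ℝ (hasDerivAt_const t₀ (deriv A 0)) (hBdiff t₀).hasDerivAt).neg
    have hden : HasDerivAt (fun t' => Real.sin (u (0, t')))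
        (Real.cos (u (0, t₀)) * (-⟪A 0, deriv B t₀⟫ / Real.sin (u (0, t₀)))) t₀ :=
      (hut 0 t₀).sin
    have hq : HasDerivAt (fun t' => -⟪deriv A 0, B t'⟫ / Real.sin (u (0, t')))
        ((-⟪deriv A 0, deriv B t₀⟫ * Real.sin (u (0, t₀)) - -⟪deriv A 0, B t₀⟫ *
          (Real.cos (u (0, t₀)) * (-⟪A 0, deriv B t₀⟫ / Real.sin (u (0, t₀)))))
          / (Real.sin (u (0, t₀))) ^ 2) t₀ := hnum.div hden (hsin 0 t₀).ne'
    rw [h0] at hq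
    simp only [inner_zero_right, neg_zero, zero_mul, zero_div, mul_zero, neg_mul,
      sub_zero, zero_sub, neg_neg, mul_zero] at hq
    have hzero : deriv (fun t' => deriv (fun s' => u (s', t')) (0 : ℝ)) t₀ = 0 := by
      rw [hfun]
      simpa using hq.deriv
    have hKs : -K * Real.sin (u (0, t₀)) = 0 := by rw [← hcurv 0 t₀]; exact hzero
    have : K = 0 := by
      rcases mul_eq_zero.mp hKs with h | h
      · linarith [neg_eq_zero.mp h]
      · exact absurd h (hsin 0 t₀).ne'
    exact hK this
  -- the integral quantities
  set G : ℝ → ℝ := fun s => ∫ t in (0 : ℝ)..1, Real.sin (u (s, t)) with hGdef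
  have hGnonneg : ∀ s, 0 ≤ G s := by
    intro s
    apply intervalIntegral.integral_nonneg (by norm_num)
    intro t _; exact (hsin s t).le
  set W : ℝ → ℝ := fun s => d1 (s, 1) - d1 (s, 0) with hWdef
  have hWcont : Continuous W :=
    (hd1.continuous.comp (continuous_id.prodMk continuous_const)).sub
      (hd1.continuous.comp (continuous_id.prodMk continuous_const))
  have hd1t : ∀ s t, HasDerivAt (fun t' => d1 (s, t')) (-K * Real.sin (u (s, t))) t := by
    intro s t
    have hdiff : DifferentiableAt ℝ (fun t' => d1 (s, t')) t :=
      ((hd1.differentiable (by norm_num)).comp ((differentiable_const s).prodMk differentiable_id)) t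
    have h := hdiff.hasDerivAt
    have heq : deriv (fun t' => d1 (s, t')) t = -K * Real.sin (u (s, t)) := by
      rw [← hcurv s t]
      congr 1
      funext t'
      exact (hderiv_eq s t').symm
    rwa [heq] at h
  have hW_eq : ∀ s, W s = -K * G s := by
    intro s
    have hFTC : ∫ t in (0 : ℝ)..1, -K * Real.sin (u (s, t)) = d1 (s, 1) - d1 (s, 0) := by
      exact intervalIntegral.integral_eq_sub_of_hasDerivAt (f := fun t' => d1 (s, t'))
        (fun t _ => hd1t s t)
        ((continuous_const.mul (Real.continuous_sin.comp
          (hucont.comp (continuous_const.prodMk continuous_id)))).intervalIntegrable 0 1)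
    rw [hWdef]
    simp only [hGdef]
    rw [← hFTC, intervalIntegral.integral_const_mul]
  have hWint : ∀ S : ℝ, ∫ s in (0 : ℝ)..S, W s = (u (S, 1) - u (S, 0)) - (u (0, 1) - u (0, 0)) := by
    intro S
    have hd : ∀ s ∈ Set.uIcc (0 : ℝ) S, HasDerivAt (fun s' => u (s', 1) - u (s', 0)) (W s) s :=
      fun s _ => (hud1 s 1).sub (hud1 s 0)
    have h2 := intervalIntegral.integral_eq_sub_of_hasDerivAt hd (hWcont.intervalIntegrable 0 S)
    rw [h2]
  have hbnd : ∀ S : ℝ, |∫ s in (0 : ℝ)..S, W s| < 2 * Real.pi := by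
    intro S
    rw [hWint S]
    have h1 := hrange S 1; have h2 := hrange S 0
    have h3 := hrange 0 1; have h4 := hrange 0 0
    rw [abs_lt]
    constructor
    · linarith [h1.1, h2.2, h3.2, h4.1]
    · linarith [h1.2, h2.1, h3.1, h4.2]
  -- G takes arbitrarily small values
  have hsmall : ∀ ε : ℝ, 0 < ε → ∃ s : ℝ, G s < ε := by
    intro ε hε
    by_contra hcon
    push_neg at hcon
    rcases lt_or_gt_of_ne hK with hKneg | hKpos
    · -- K < 0 : W ≥ (-K)*ε > 0
      have hKε : 0 < -K * ε := by
        have : 0 < -K := by linarith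
        positivity
      set S : ℝ := (2 * Real.pi + 1) / (-K * ε) with hS
      have hSpos : 0 < S := by
        apply div_pos (by positivity) hKε
      have hge : ∀ s ∈ Set.Icc (0 : ℝ) S, -K * ε ≤ W s := by
        intro s _
        rw [hW_eq s]
        have hc := hcon s
        nlinarith
      have hmono := intervalIntegral.integral_mono_on hSpos.le
        (continuous_const.intervalIntegrable (μ := MeasureTheory.volume) 0 S) (hWcont.intervalIntegrable 0 S) hge
      rw [intervalIntegral.integral_const] at hmono
      have hb := hbnd S
      rw [abs_lt] at hb
      have hSval : (S - 0) • (-K * ε) = 2 * Real.pi + 1 := by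
        rw [smul_eq_mul, sub_zero, hS]
        field_simp
      rw [hSval] at hmono
      linarith [hb.2]
    · -- K > 0 : W ≤ -K*ε < 0
      have hKε : 0 < K * ε := by positivity
      set S : ℝ := (2 * Real.pi + 1) / (K * ε) with hS
      have hSpos : 0 < S := div_pos (by positivity) hKε
      have hle : ∀ s ∈ Set.Icc (0 : ℝ) S, W s ≤ -K * ε := by
        intro s _
        rw [hW_eq s]
        have hc := hcon s
        nlinarith
      have hmono := intervalIntegral.integral_mono_on hSpos.le
        (hWcont.intervalIntegrable 0 S) (continuous_const.intervalIntegrable (μ := MeasureTheory.volume) 0 S) hle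
      rw [intervalIntegral.integral_const] at hmono
      have hb := hbnd S
      rw [abs_lt] at hb
      have hSval : (S - 0) • (-K * ε) = -(2 * Real.pi + 1) := by
        rw [smul_eq_mul, sub_zero, hS]
        field_simp
      rw [hSval] at hmono
      linarith [hb.1]
  have hseq : ∀ n : ℕ, ∃ s, G s < 1 / ((n : ℝ) + 1) := fun n => hsmall _ (by positivity)
  choose sq hsq using hseq
  have hsphere : ∀ n, A (sq n) ∈ Metric.sphere (0 : ℍ[ℝ]) 1 := by
    intro n
    simpa [Metric.mem_sphere, dist_zero_right] using hAn (sq n)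
  obtain ⟨q, hqmem, φ, hφ, htend⟩ :=
    (isCompact_sphere (0 : ℍ[ℝ]) 1).tendsto_subseq hsphere
  have hqnorm : ‖q‖ = 1 := by
    simpa [Metric.mem_sphere, dist_zero_right] using hqmem
  have hsin_eq : ∀ s t, Real.sin (u (s, t)) = Real.sqrt (1 - ⟪A s, B t⟫ ^ 2) := by
    intro s t
    rw [← hcos s t, Real.sin_eq_sqrt_one_sub_cos_sq (hrange s t).1.le (hrange s t).2.le]
  set f0 : ℝ → ℝ := fun t => Real.sqrt (1 - ⟪q, B t⟫ ^ 2) with hf0def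
  have hf0cont : Continuous f0 :=
    Real.continuous_sqrt.comp (continuous_const.sub
      ((continuous_const.inner hB.continuous).pow 2))
  have hDCT : Filter.Tendsto (fun n => G (sq (φ n))) Filter.atTop
      (nhds (∫ t in (0 : ℝ)..1, f0 t)) := by
    simp only [hGdef]
    apply intervalIntegral.tendsto_integral_filter_of_dominated_convergence
      (bound := fun _ => (1 : ℝ))
    · exact Filter.Eventually.of_forall fun n =>
        (Real.continuous_sin.comp (hucont.comp
          (continuous_const.prodMk continuous_id))).aestronglyMeasurable
    · refine Filter.Eventually.of_forall fun n => Filter.Eventually.of_forall fun t _ => ?_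
      rw [Real.norm_eq_abs]
      exact Real.abs_sin_le_one _
    · exact intervalIntegrable_const
    · refine Filter.Eventually.of_forall fun t _ => ?_
      have hfn : (fun n => Real.sin (u (sq (φ n), t)))
          = fun n => Real.sqrt (1 - ⟪A (sq (φ n)), B t⟫ ^ 2) :=
        funext fun n => hsin_eq _ _
      rw [hfn]
      have hc : Continuous fun x : ℍ[ℝ] => Real.sqrt (1 - ⟪x, B t⟫ ^ 2) :=
        Real.continuous_sqrt.comp (continuous_const.sub
          ((continuous_id.inner continuous_const).pow 2))
      exact (hc.tendsto q).comp htend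
  have hG0 : Filter.Tendsto (fun n => G (sq (φ n))) Filter.atTop (nhds 0) := by
    apply squeeze_zero (fun n => hGnonneg _)
      (g := fun n : ℕ => 1 / ((n : ℝ) + 1))
    · intro n
      have h1 : G (sq (φ n)) < 1 / ((φ n : ℝ) + 1) := hsq (φ n)
      have h2 : (1 : ℝ) / ((φ n : ℝ) + 1) ≤ 1 / ((n : ℝ) + 1) := by
        apply one_div_le_one_div_of_le (by positivity)
        have hφn : (n : ℝ) ≤ (φ n : ℝ) := Nat.cast_le.mpr hφ.le_apply
        linarith
      linarith
    · exact tendsto_one_div_add_atTop_nhds_zero_nat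
  have hL0 : ∫ t in (0 : ℝ)..1, f0 t = 0 := tendsto_nhds_unique hDCT hG0
  -- hence the inner product is ±1 on (0,1)
  have hone : ∀ t₁ ∈ Set.Ioo (0 : ℝ) 1, ⟪q, B t₁⟫ ^ 2 = 1 := by
    intro t₁ ht₁
    by_contra hne
    have hCS : |⟪q, B t₁⟫| ≤ 1 := by
      calc |⟪q, B t₁⟫| ≤ ‖q‖ * ‖B t₁‖ := abs_real_inner_le_norm _ _
        _ = 1 := by rw [hqnorm, hBn t₁, mul_one]
    have hlt : ⟪q, B t₁⟫ ^ 2 < 1 := by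
      rcases lt_or_eq_of_le (by nlinarith [sq_abs ⟪q, B t₁⟫, abs_nonneg ⟪q, B t₁⟫] :
        ⟪q, B t₁⟫ ^ 2 ≤ 1) with h | h
      · exact h
      · exact absurd h hne
    have hpos : 0 < f0 t₁ := Real.sqrt_pos.mpr (by linarith)
    have hev : ∀ᶠ x in nhds t₁, f0 t₁ / 2 < f0 x :=
      hf0cont.continuousAt.eventually_const_lt (by linarith)
    obtain ⟨ε, hε, hball⟩ := Metric.eventually_nhds_iff.mp hev
    set α : ℝ := max 0 (t₁ - ε / 2) with hα
    set β : ℝ := min 1 (t₁ + ε / 2) with hβ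
    have hαt : α < t₁ := by
      apply max_lt ht₁.1
      linarith
    have htβ : t₁ < β := by
      apply lt_min ht₁.2
      linarith
    have hαβ : α < β := lt_trans hαt htβ
    have hsub : ∀ x ∈ Set.Ioo α β, 0 < f0 x := by
      intro x hx
      have h1 : t₁ - ε / 2 ≤ α := le_max_right _ _
      have h2 : β ≤ t₁ + ε / 2 := min_le_right _ _
      have hdist : dist x t₁ < ε := by
        rw [Real.dist_eq, abs_lt]
        constructor <;> [linarith [hx.1]; linarith [hx.2]]
      linarith [hball hdist]
    have hposint : 0 < ∫ t in α..β, f0 t :=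
      intervalIntegral.intervalIntegral_pos_of_pos_on
        (hf0cont.intervalIntegrable α β) hsub hαβ
    have hmono : ∫ t in α..β, f0 t ≤ ∫ t in (0 : ℝ)..1, f0 t := by
      apply intervalIntegral.integral_mono_interval (le_max_left _ _) hαβ.le (min_le_left _ _)
      · exact Filter.Eventually.of_forall fun x => Real.sqrt_nonneg _
      · exact hf0cont.intervalIntegrable 0 1
    linarith [hL0 ▸ (lt_of_lt_of_le hposint hmono)]
  -- B is constant on (0,1), so deriv B vanishes there
  have hBval : ∀ t ∈ Set.Ioo (0 : ℝ) 1, B t = q ∨ B t = -q := by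
    intro t ht
    have h1 := hone t ht
    have h2 : ⟪q, B t⟫ = 1 ∨ ⟪q, B t⟫ = -1 := by
      rcases mul_self_eq_one_iff.mp (by nlinarith [h1] : ⟪q, B t⟫ * ⟪q, B t⟫ = 1) with h | h
      · exact Or.inl h
      · exact Or.inr h
    rcases h2 with h | h
    · left
      exact ((inner_eq_one_iff_of_norm_eq_one (𝕜 := ℝ) hqnorm (hBn t)).mp h).symm
    · right
      have h3 : ⟪q, -B t⟫ = 1 := by rw [inner_neg_right]; linarith
      have h4 : ‖-B t‖ = 1 := by rw [norm_neg]; exact hBn t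
      have h5 := (inner_eq_one_iff_of_norm_eq_one (𝕜 := ℝ) hqnorm h4).mp h3
      have h6 := congrArg Neg.neg h5
      simp only [neg_neg] at h6
      exact h6.symm
  have hhalf : (1 / 2 : ℝ) ∈ Set.Ioo (0 : ℝ) 1 := by norm_num
  have hconst : ∀ t ∈ Set.Ioo (0 : ℝ) 1, B t = B (1 / 2) := by
    intro t ht
    by_contra hne
    set h : ℝ → ℝ := fun t' => ‖B t' - B (1 / 2)‖ with hhdef
    have hhcont : Continuous h := (hB.continuous.sub continuous_const).norm
    have hval : ∀ t' ∈ Set.Ioo (0 : ℝ) 1, h t' = 0 ∨ h t' = 2 := by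
      intro t' ht'
      have h2q : ‖q + q‖ = 2 := by
        rw [← two_smul ℝ, norm_smul, hqnorm]
        norm_num
      rcases hBval t' ht' with h1 | h1 <;> rcases hBval (1 / 2) hhalf with h2 | h2
      · left; show ‖B t' - B (1 / 2)‖ = 0; rw [h1, h2, sub_self, norm_zero]
      · right
        show ‖B t' - B (1 / 2)‖ = 2
        rw [h1, h2, sub_neg_eq_add]
        exact h2q
      · right
        show ‖B t' - B (1 / 2)‖ = 2
        rw [h1, h2]
        have hneg : -q - q = -(q + q) := by abel
        rw [hneg, norm_neg]
        exact h2q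
      · left; show ‖B t' - B (1 / 2)‖ = 0; rw [h1, h2, sub_self, norm_zero]
    have ht2 : h t = 2 := by
      rcases hval t ht with h0 | h2
      · exact absurd (sub_eq_zero.mp (norm_eq_zero.mp h0)) hne
      · exact h2
    have h0 : h (1 / 2) = 0 := by
      show ‖B (1 / 2) - B (1 / 2)‖ = 0
      rw [sub_self, norm_zero]
    have hIVT := intermediate_value_uIcc (a := (1 / 2 : ℝ)) (b := t) hhcont.continuousOn
    have h1mem : (1 : ℝ) ∈ Set.uIcc (h (1 / 2)) (h t) := by
      rw [h0, ht2]
      rw [Set.uIcc_of_le (by norm_num)]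
      constructor <;> norm_num
    obtain ⟨t₃, ht₃, ht₃eq⟩ := hIVT h1mem
    have ht₃mem : t₃ ∈ Set.Ioo (0 : ℝ) 1 :=
      (Set.ordConnected_Ioo.uIcc_subset hhalf ht) ht₃
    rcases hval t₃ ht₃mem with hv | hv <;> rw [ht₃eq] at hv <;> norm_num at hv
  -- hence the derivative of B vanishes at 1/2
  have hev2 : B =ᶠ[nhds (1 / 2 : ℝ)] fun _ => B (1 / 2) := by
    filter_upwards [isOpen_Ioo.mem_nhds hhalf] with t ht
    exact hconst t ht
  have hderiv0 : deriv B (1 / 2) = 0 := by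
    rw [hev2.deriv_eq]
    exact deriv_const _ _
  exact key0 (1 / 2) hderiv0
end

section
/- Let m ≥ 1, and let a, b : ℝ → Matrix (Fin m) (Fin m) ℂ be smooth curves taking values in the unitary group (a(s)ᴴ · a(s) = 1 and b(t)ᴴ · b(t) = 1 for all s, t), parametrized by arc length with respect to the Frobenius inner product, i.e. re(trace(a'(s)ᴴ · a'(s))) = 1 and re(trace(b'(t)ᴴ · b'(t))) = 1 for all s, t. Let u : ℝ × ℝ → ℝ be a smooth function with 0 < u(s,t) < π and cos(u(s,t)) = re( trace( (a'(s) · b(t))ᴴ · (a(s) · b'(t)) ) ) for all (s,t) (so u is the angle between the coordinate vector fields f_s = a'(s)·b(t) and f_t = a(s)·b'(t) of the regular translation surface f(s,t) = a(s)·b(t)). If there is a real constant K such that ∂²u/∂t∂s (s,t) = −K · sin(u(s,t)) for all (s,t), then K = 0. -/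
open Matrix
open scoped ContDiff

attribute [local instance] Matrix.frobeniusNormedAddCommGroup Matrix.frobeniusNormedSpace
attribute [local instance] Matrix.frobeniusNormedRing Matrix.frobeniusNormedAlgebra

section EFlemmas

variable {m : ℕ}

noncomputable def eF (X Y : Matrix (Fin m) (Fin m) ℂ) : ℝ := (Matrix.trace (Xᴴ * Y)).re

theorem eF_symm (X Y : Matrix (Fin m) (Fin m) ℂ) : eF X Y = eF Y X := by
  unfold eF
  rw [← conjTranspose_conjTranspose X]
  rw [← conjTranspose_mul, Matrix.trace_conjTranspose]
  simp

theorem eF_add_left (X Y Z : Matrix (Fin m) (Fin m) ℂ) :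
    eF (X + Y) Z = eF X Z + eF Y Z := by
  unfold eF; rw [conjTranspose_add, Matrix.add_mul, Matrix.trace_add]; simp

theorem eF_sub_left (X Y Z : Matrix (Fin m) (Fin m) ℂ) :
    eF (X - Y) Z = eF X Z - eF Y Z := by
  unfold eF; rw [conjTranspose_sub, Matrix.sub_mul, Matrix.trace_sub]; simp

theorem eF_smul_left (r : ℝ) (X Z : Matrix (Fin m) (Fin m) ℂ) :
    eF (r • X) Z = r * eF X Z := by
  unfold eF
  rw [conjTranspose_smul, star_trivial, Matrix.smul_mul, Matrix.trace_smul]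
  simp [Complex.smul_re]

theorem eF_add_right (X Y Z : Matrix (Fin m) (Fin m) ℂ) :
    eF X (Y + Z) = eF X Y + eF X Z := by
  rw [eF_symm, eF_add_left, eF_symm Y, eF_symm Z]

theorem eF_sub_right (X Y Z : Matrix (Fin m) (Fin m) ℂ) :
    eF X (Y - Z) = eF X Y - eF X Z := by
  rw [eF_symm, eF_sub_left, eF_symm Y, eF_symm Z]

theorem eF_smul_right (r : ℝ) (X Z : Matrix (Fin m) (Fin m) ℂ) :
    eF X (r • Z) = r * eF X Z := by
  rw [eF_symm, eF_smul_left, eF_symm]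

theorem eF_zero_right (X : Matrix (Fin m) (Fin m) ℂ) : eF X 0 = 0 := by
  unfold eF; rw [Matrix.mul_zero]; simp

theorem eF_self_eq_sum (X : Matrix (Fin m) (Fin m) ℂ) :
    eF X X = ∑ j, ∑ i, Complex.normSq (X i j) := by
  unfold eF
  rw [Matrix.trace]
  simp only [Matrix.diag_apply, Matrix.mul_apply, Matrix.conjTranspose_apply]
  rw [Complex.re_sum]
  congr 1; ext j
  rw [Complex.re_sum]
  congr 1; ext i
  have hs : star (X i j) = (starRingEnd ℂ) (X i j) := rfl
  rw [mul_comm, hs, Complex.mul_conj]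
  simp

theorem eF_self_nonneg (X : Matrix (Fin m) (Fin m) ℂ) : 0 ≤ eF X X := by
  rw [eF_self_eq_sum]
  exact Finset.sum_nonneg fun j _ => Finset.sum_nonneg fun i _ => Complex.normSq_nonneg _

theorem eF_self_eq_zero {X : Matrix (Fin m) (Fin m) ℂ} (h : eF X X = 0) : X = 0 := by
  rw [eF_self_eq_sum] at h
  ext i j
  have h1 : ∀ j ∈ Finset.univ, (0:ℝ) ≤ ∑ i, Complex.normSq (X i j) := by
    intro j _; exact Finset.sum_nonneg fun i _ => Complex.normSq_nonneg _
  have h2 := (Finset.sum_eq_zero_iff_of_nonneg h1).mp h j (Finset.mem_univ j)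
  have h3 : ∀ i ∈ Finset.univ, (0:ℝ) ≤ Complex.normSq (X i j) := by
    intro i _; exact Complex.normSq_nonneg _
  have h4 := (Finset.sum_eq_zero_iff_of_nonneg h3).mp h2 i (Finset.mem_univ i)
  simpa using Complex.normSq_eq_zero.mp h4

theorem eF_sq_le (X Y : Matrix (Fin m) (Fin m) ℂ) :
    (eF X Y)^2 ≤ eF X X * eF Y Y := by
  rcases eq_or_lt_of_le (eF_self_nonneg X) with h | h
  · have hX : X = 0 := eF_self_eq_zero h.symm
    subst hX
    have : eF (0 : Matrix (Fin m) (Fin m) ℂ) Y = 0 := by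
      have := eF_sub_left 0 0 Y
      simpa using this
    rw [this]; rw [← h]; simp
  · have key : ∀ c : ℝ, 0 ≤ c^2 * eF X X + 2*(c*eF X Y) + eF Y Y := by
      intro c
      have h0 := eF_self_nonneg (c • X + Y)
      have e1 : eF (c • X + Y) (c • X + Y)
          = c^2 * eF X X + 2*(c*eF X Y) + eF Y Y := by
        rw [eF_add_left, eF_add_right, eF_add_right, eF_smul_left, eF_smul_right,
          eF_smul_left, eF_smul_right, eF_symm Y X]
        ring
      linarith [e1 ▸ h0]
    have h2 := key (-(eF X Y / eF X X))
    have hne : eF X X ≠ 0 := ne_of_gt h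
    have e2 : (-(eF X Y / eF X X)) ^ 2 * eF X X + 2 * (-(eF X Y / eF X X) * eF X Y) + eF Y Y
        = eF Y Y - (eF X Y)^2 / eF X X := by
      field_simp; ring
    rw [e2, sub_nonneg, div_le_iff₀ h] at h2
    linarith [h2]

theorem eF_expand (X Y Z : Matrix (Fin m) (Fin m) ℂ) (c c' : ℝ) :
    eF (X - c • Z) (Y - c' • Z)
      = eF X Y - c' * eF X Z - c * eF Z Y + c * (c' * eF Z Z) := by
  rw [eF_sub_left, eF_sub_right, eF_sub_right, eF_smul_right, eF_smul_left,
    eF_smul_left, eF_smul_right]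
  ring

/-- conjTranspose as a continuous ℝ-linear map -/
noncomputable def ctL (m : ℕ) : Matrix (Fin m) (Fin m) ℂ →L[ℝ] Matrix (Fin m) (Fin m) ℂ :=
  LinearMap.toContinuousLinearMap
    { toFun := fun X => Xᴴ
      map_add' := fun X Y => conjTranspose_add X Y
      map_smul' := fun r X => by
        simpa using conjTranspose_smul r X }

@[simp] theorem ctL_apply (X : Matrix (Fin m) (Fin m) ℂ) : ctL m X = Xᴴ := rfl

/-- real part of trace as a continuous ℝ-linear map -/
noncomputable def reTrL (m : ℕ) : Matrix (Fin m) (Fin m) ℂ →L[ℝ] ℝ :=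
  LinearMap.toContinuousLinearMap
    { toFun := fun X => (Matrix.trace X).re
      map_add' := by intro X Y; simp [Matrix.trace_add]
      map_smul' := by intro r X; simp [Matrix.trace_smul, Complex.smul_re] }

@[simp] theorem reTrL_apply (X : Matrix (Fin m) (Fin m) ℂ) : reTrL m X = (Matrix.trace X).re := rfl

theorem hasDerivAt_eF {A B : ℝ → Matrix (Fin m) (Fin m) ℂ} {A' B' : Matrix (Fin m) (Fin m) ℂ}
    {s : ℝ} (hA : HasDerivAt A A' s) (hB : HasDerivAt B B' s) :
    HasDerivAt (fun x => eF (A x) (B x)) (eF A' (B s) + eF (A s) B') s := by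
  have h1 : HasDerivAt (fun x => (A x)ᴴ) (A'ᴴ) s := by
    have := ((ctL m).hasFDerivAt (x := A s)).comp_hasDerivAt s hA
    exact this
  have h2 : HasDerivAt (fun x => (A x)ᴴ * B x) (A'ᴴ * B s + (A s)ᴴ * B') s := h1.mul hB
  have h3 := ((reTrL m).hasFDerivAt (x := (A s)ᴴ * B s)).comp_hasDerivAt s h2
  exact h3.congr_deriv (by show (Matrix.trace (A'ᴴ * B s + (A s)ᴴ * B')).re = _; simp [eF, Matrix.trace_add])

end EFlemmas

theorem hasDerivAt_slice1 {f : ℝ × ℝ → ℝ} {s t : ℝ} (hf : DifferentiableAt ℝ f (s, t)) :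
    HasDerivAt (fun s' => f (s', t)) (fderiv ℝ f (s, t) (1, 0)) s := by
  have h1 : HasDerivAt (fun s' : ℝ => ((s' : ℝ), t)) ((1 : ℝ), (0 : ℝ)) s :=
    (hasDerivAt_id s).prodMk (hasDerivAt_const s t)
  exact hf.hasFDerivAt.comp_hasDerivAt s h1

theorem hasDerivAt_slice2 {f : ℝ × ℝ → ℝ} {s t : ℝ} (hf : DifferentiableAt ℝ f (s, t)) :
    HasDerivAt (fun t' => f (s, t')) (fderiv ℝ f (s, t) (0, 1)) t := by
  have h1 : HasDerivAt (fun t' : ℝ => (s, (t' : ℝ))) ((0 : ℝ), (1 : ℝ)) t :=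
    (hasDerivAt_const t s).prodMk (hasDerivAt_id t)
  exact hf.hasFDerivAt.comp_hasDerivAt t h1

theorem schwarz_slice {u : ℝ × ℝ → ℝ} (hu : ContDiff ℝ (⊤ : ℕ∞) u) (s t : ℝ) :
    HasDerivAt (fun s' => fderiv ℝ u (s', t) (0, 1))
      (deriv (fun t' => fderiv ℝ u (s, t') (1, 0)) t) s := by
  have hΦ : ContDiff ℝ (⊤ : ℕ∞) (fderiv ℝ u) := hu.fderiv_right (by simp)
  have hΦd : Differentiable ℝ (fderiv ℝ u) := hΦ.differentiable (by simp)
  have hutF : ContDiff ℝ (⊤ : ℕ∞) (fun p : ℝ × ℝ => fderiv ℝ u p (0, 1)) :=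
    hΦ.clm_apply contDiff_const
  have husF : ContDiff ℝ (⊤ : ℕ∞) (fun p : ℝ × ℝ => fderiv ℝ u p (1, 0)) :=
    hΦ.clm_apply contDiff_const
  have h1 : HasDerivAt (fun s' => fderiv ℝ u (s', t) (0, 1))
      (fderiv ℝ (fun p : ℝ × ℝ => fderiv ℝ u p (0, 1)) (s, t) (1, 0)) s :=
    hasDerivAt_slice1 ((hutF.differentiable (by simp)) (s, t))
  have h2 : HasDerivAt (fun t' => fderiv ℝ u (s, t') (1, 0))
      (fderiv ℝ (fun p : ℝ × ℝ => fderiv ℝ u p (1, 0)) (s, t) (0, 1)) t :=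
    hasDerivAt_slice2 ((husF.differentiable (by simp)) (s, t))
  rw [h2.deriv]
  have e1 : fderiv ℝ (fun p : ℝ × ℝ => fderiv ℝ u p (0, 1)) (s, t) (1, 0)
      = fderiv ℝ (fderiv ℝ u) (s, t) (1, 0) (0, 1) := by
    rw [fderiv_clm_apply (hΦd (s, t)) (differentiableAt_const _)]
    simp
  have e2 : fderiv ℝ (fun p : ℝ × ℝ => fderiv ℝ u p (1, 0)) (s, t) (0, 1)
      = fderiv ℝ (fderiv ℝ u) (s, t) (0, 1) (1, 0) := by
    rw [fderiv_clm_apply (hΦd (s, t)) (differentiableAt_const _)]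
    simp
  have hsymm : fderiv ℝ (fderiv ℝ u) (s, t) (1, 0) (0, 1)
      = fderiv ℝ (fderiv ℝ u) (s, t) (0, 1) (1, 0) := by
    exact second_derivative_symmetric
      (fun y => ((hu.differentiable (by simp)) y).hasFDerivAt)
      ((hΦd (s, t)).hasFDerivAt) _ _
  rw [e2, ← hsymm, ← e1]
  exact h1

theorem no_escape {G g : ℝ → ℝ} (hG : ∀ t, HasDerivAt G (g t) t) {κ c : ℝ}
    (hbd : ∀ t, |G t| ≤ κ) (hc : 0 < c) (hg : ∀ t, c ≤ g t) : False := by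
  set H : ℝ → ℝ := fun t => G t - c * t with hH
  have hHd : ∀ t, HasDerivAt H (g t - c) t := by
    intro t
    have h2 : HasDerivAt (fun t : ℝ => c * t) c t := by
      have h0 : HasDerivAt (fun y : ℝ => c * y) (c * 1) t := (hasDerivAt_id t).const_mul c
      simpa using h0
    exact (hG t).sub h2
  have hdiff : Differentiable ℝ H := fun t => (hHd t).differentiableAt
  have hmono : Monotone H := by
    apply monotone_of_deriv_nonneg hdiff
    intro t
    rw [(hHd t).deriv]
    linarith [hg t]
  set T : ℝ := (2 * κ + 1) / c with hT
  have hκ : 0 ≤ κ := le_trans (abs_nonneg _) (hbd 0)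
  have hT0 : 0 ≤ T := by positivity
  have h1 : H 0 ≤ H T := hmono hT0
  have h2 : c * T = 2 * κ + 1 := by rw [hT]; field_simp
  have h3 := hbd T
  have h4 := hbd 0
  have h1' : G 0 - c * 0 ≤ G T - c * T := h1
  rw [abs_le] at h3 h4
  nlinarith [h1', h2, h3.1, h3.2, h4.1, h4.2]

theorem integral_lower_bound {f f' : ℝ → ℝ} {s₀ s₁ sx M ε : ℝ}
    (h01 : s₀ < s₁) (hsx : sx ∈ Set.Icc s₀ s₁) (hM : 0 < M) (hε : 0 < ε)
    (hf : ∀ s, HasDerivAt f (f' s) s)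
    (hf' : ∀ s ∈ Set.Icc s₀ s₁, |f' s| ≤ M)
    (hnn : ∀ s ∈ Set.Icc s₀ s₁, 0 ≤ f s)
    (hfx : ε ≤ f sx) :
    ε / 2 * min ((s₁ - s₀) / 2) (ε / (2 * M)) ≤ ∫ s in s₀..s₁, f s := by
  set r : ℝ := min ((s₁ - s₀) / 2) (ε / (2 * M)) with hr
  have hr0 : 0 < r := lt_min (by linarith) (by positivity)
  have hrL : r ≤ (s₁ - s₀) / 2 := min_le_left _ _
  have hrM : M * r ≤ ε / 2 := by
    have : r ≤ ε / (2 * M) := min_le_right _ _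
    calc M * r ≤ M * (ε / (2 * M)) := by nlinarith
      _ = ε / 2 := by field_simp
  have hcont : Continuous f := by
    rw [continuous_iff_continuousAt]; exact fun x => (hf x).continuousAt
  have hlip : ∀ s ∈ Set.Icc s₀ s₁, ε - M * |s - sx| ≤ f s := by
    intro s hs
    have := Convex.norm_image_sub_le_of_norm_hasDerivWithin_le
      (f := f) (f' := f') (C := M) (s := Set.Icc s₀ s₁)
      (fun x hx => (hf x).hasDerivWithinAt)
      (fun x hx => by simpa using hf' x hx) (convex_Icc s₀ s₁) hsx hs
    rw [Real.norm_eq_abs, Real.norm_eq_abs] at this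
    have h1 : |f s - f sx| ≤ M * |s - sx| := this
    have h2 := abs_le.mp h1
    linarith [h2.1]
  obtain ⟨c, d, hcd, hc0, hd1, hdc, hsub⟩ :
      ∃ c d, c ≤ d ∧ s₀ ≤ c ∧ d ≤ s₁ ∧ d - c = r ∧
        ∀ s ∈ Set.Icc c d, |s - sx| ≤ r := by
    by_cases hcase : sx + r ≤ s₁
    · refine ⟨sx, sx + r, by linarith, hsx.1, hcase, by ring, ?_⟩
      intro s hs
      rw [abs_le]; constructor <;> [linarith [hs.1]; linarith [hs.2]]
    · refine ⟨sx - r, sx, by linarith, ?_, hsx.2, by ring, ?_⟩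
      · push_neg at hcase
        have h1 : s₀ + 2 * r ≤ s₁ := by linarith
        linarith
      · intro s hs
        rw [abs_le]; constructor <;> [linarith [hs.1]; linarith [hs.2]]
  have hmid : ∀ s ∈ Set.Icc c d, ε / 2 ≤ f s := by
    intro s hs
    have hsIcc : s ∈ Set.Icc s₀ s₁ := ⟨by linarith [hs.1], by linarith [hs.2]⟩
    have h1 := hlip s hsIcc
    have h2 := hsub s hs
    nlinarith [h1, h2, hM.le]
  have hint : ∀ x y : ℝ, IntervalIntegrable f MeasureTheory.volume x y :=
    fun x y => hcont.intervalIntegrable x y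
  have hsplit : (∫ s in s₀..s₁, f s)
      = (∫ s in s₀..c, f s) + (∫ s in c..d, f s) + (∫ s in d..s₁, f s) := by
    rw [intervalIntegral.integral_add_adjacent_intervals (hint s₀ c) (hint c d),
      intervalIntegral.integral_add_adjacent_intervals (hint s₀ d) (hint d s₁)]
  have h1 : 0 ≤ ∫ s in s₀..c, f s := by
    apply intervalIntegral.integral_nonneg hc0
    intro x hx
    exact hnn x ⟨hx.1, le_trans hx.2 (by linarith)⟩
  have h2 : 0 ≤ ∫ s in d..s₁, f s := by
    apply intervalIntegral.integral_nonneg hd1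
    intro x hx
    exact hnn x ⟨le_trans (by linarith) hx.1, hx.2⟩
  have h3 : ε / 2 * r ≤ ∫ s in c..d, f s := by
    have hconst : (∫ _ in c..d, (ε/2 : ℝ)) = (d - c) * (ε/2) := by
      simp [smul_eq_mul]; ring
    have := intervalIntegral.integral_mono_on hcd
      (intervalIntegrable_const) (hint c d) hmid
    rw [hconst, hdc] at this
    linarith [this]
  linarith [hsplit, h1, h2, h3]

set_option maxHeartbeats 1000000

/-- Theorem 1 of the paper for the unitary group `U(m)`: a translation surface
`f(s,t) = a(s)·b(t)` in `U(m)` (with `a, b` smooth curves of unitary matrices,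
parametrized by arc length for the Frobenius inner product, and angle function
`u(s,t) ∈ (0,π)` given by `cos u = re(trace(f_sᴴ · f_t))` where `f_s = a'(s)·b(t)` and
`f_t = a(s)·b'(t)`) of constant Gaussian curvature `K` (i.e. `u_{st} = −K sin u`)
is flat: `K = 0`. -/
theorem stmt_2 (m : ℕ) (hm : 1 ≤ m)
    (a b : ℝ → Matrix (Fin m) (Fin m) ℂ)
    (ha : ContDiff ℝ (⊤ : ℕ∞) a) (hb : ContDiff ℝ (⊤ : ℕ∞) b)
    (haU : ∀ s : ℝ, (a s)ᴴ * a s = 1) (hbU : ∀ t : ℝ, (b t)ᴴ * b t = 1)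
    (ha' : ∀ s : ℝ, (Matrix.trace ((deriv a s)ᴴ * deriv a s)).re = 1)
    (hb' : ∀ t : ℝ, (Matrix.trace ((deriv b t)ᴴ * deriv b t)).re = 1)
    (u : ℝ × ℝ → ℝ) (hu : ContDiff ℝ (⊤ : ℕ∞) u)
    (hrange : ∀ s t : ℝ, u (s, t) ∈ Set.Ioo (0 : ℝ) Real.pi)
    (hangle : ∀ s t : ℝ,
      Real.cos (u (s, t))
        = (Matrix.trace ((deriv a s * b t)ᴴ * (a s * deriv b t))).re)
    (K : ℝ)
    (hcurv : ∀ s t : ℝ,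
      deriv (fun t' => deriv (fun s' => u (s', t')) s) t = -K * Real.sin (u (s, t))) :
    K = 0 := by
  by_contra hK0
  -- basic smoothness facts
  have hud : Differentiable ℝ u := hu.differentiable (by simp)
  have had : Differentiable ℝ a := ha.differentiable (by simp)
  have hainf : ContDiff ℝ (∞ : WithTop ℕ∞) a := ha.of_le (by simp)
  have ha1 : ContDiff ℝ (∞ : WithTop ℕ∞) (deriv a) := (contDiff_infty_iff_deriv.mp hainf).2
  have ha1d : Differentiable ℝ (deriv a) := ha1.differentiable (by simp)
  -- the curves A, A', Q
  set A : ℝ → Matrix (Fin m) (Fin m) ℂ := fun s => (a s)ᴴ * deriv a s with hA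
  set A' : ℝ → Matrix (Fin m) (Fin m) ℂ :=
    fun s => (deriv a s)ᴴ * deriv a s + (a s)ᴴ * deriv (deriv a) s with hA'
  set Q : ℝ → Matrix (Fin m) (Fin m) ℂ := fun t => deriv b t * (b t)ᴴ with hQ
  -- partial derivative functions
  set usF : ℝ × ℝ → ℝ := fun p => fderiv ℝ u p (1, 0) with husF
  set utF : ℝ × ℝ → ℝ := fun p => fderiv ℝ u p (0, 1) with hutF
  have hus : ∀ s t : ℝ, HasDerivAt (fun s' => u (s', t)) (usF (s, t)) s :=
    fun s t => hasDerivAt_slice1 (hud (s, t))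
  have hut : ∀ s t : ℝ, HasDerivAt (fun t' => u (s, t')) (utF (s, t)) t :=
    fun s t => hasDerivAt_slice2 (hud (s, t))
  -- angle identity
  have h1 : ∀ s t : ℝ, Real.cos (u (s, t)) = eF (A s) (Q t) := by
    intro s t
    rw [hangle s t]
    show _ = (Matrix.trace ((A s)ᴴ * Q t)).re
    rw [hA, hQ]
    congr 1
    rw [conjTranspose_mul, conjTranspose_mul, conjTranspose_conjTranspose,
      Matrix.mul_assoc ((b t)ᴴ), Matrix.trace_mul_comm ((b t)ᴴ)]
    simp [Matrix.mul_assoc]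
  -- unit norms
  have h2 : ∀ s : ℝ, eF (A s) (A s) = 1 := by
    intro s
    have hone : a s * (a s)ᴴ = 1 := mul_eq_one_comm.mp (haU s)
    show (Matrix.trace ((A s)ᴴ * A s)).re = 1
    rw [hA]
    have key : ((a s)ᴴ * deriv a s)ᴴ * ((a s)ᴴ * deriv a s) = (deriv a s)ᴴ * deriv a s := by
      rw [conjTranspose_mul, conjTranspose_conjTranspose, Matrix.mul_assoc,
        ← Matrix.mul_assoc (a s) ((a s)ᴴ) (deriv a s), hone, Matrix.one_mul]
    rw [key]
    exact ha' s
  have h3 : ∀ t : ℝ, eF (Q t) (Q t) = 1 := by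
    intro t
    show (Matrix.trace ((Q t)ᴴ * Q t)).re = 1
    rw [hQ]
    have key : (deriv b t * (b t)ᴴ)ᴴ * (deriv b t * (b t)ᴴ)
        = b t * ((deriv b t)ᴴ * deriv b t) * (b t)ᴴ := by
      rw [conjTranspose_mul, conjTranspose_conjTranspose]
      rw [Matrix.mul_assoc, Matrix.mul_assoc, Matrix.mul_assoc]
    rw [key, Matrix.trace_mul_comm, ← Matrix.mul_assoc, hbU t, Matrix.one_mul]
    exact hb' t
  -- derivative of A
  have hAD : ∀ s : ℝ, HasDerivAt A (A' s) s := by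
    intro s
    have hda : HasDerivAt a (deriv a s) s := (had s).hasDerivAt
    have hda1 : HasDerivAt (deriv a) (deriv (deriv a) s) s := (ha1d s).hasDerivAt
    have hct : HasDerivAt (fun x => (a x)ᴴ) ((deriv a s)ᴴ) s := by
      have := ((ctL m).hasFDerivAt (x := a s)).comp_hasDerivAt s hda
      exact this
    exact hct.mul hda1
  -- orthogonality
  have h4 : ∀ s : ℝ, eF (A s) (A' s) = 0 := by
    intro s
    have hd := hasDerivAt_eF (hAD s) (hAD s)
    have hconst : (fun x => eF (A x) (A x)) = fun _ => (1 : ℝ) := funext fun x => h2 x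
    rw [hconst] at hd
    have h0 : HasDerivAt (fun _ : ℝ => (1 : ℝ)) 0 s := hasDerivAt_const s 1
    have := hd.unique h0
    rw [eF_symm (A' s) (A s)] at this
    linarith
  -- derivative of angle identity in s
  have h5 : ∀ s t : ℝ, Real.sin (u (s, t)) * usF (s, t) = -eF (A' s) (Q t) := by
    intro s t
    have hL : HasDerivAt (fun s' => Real.cos (u (s', t)))
        (-Real.sin (u (s, t)) * usF (s, t)) s := (hus s t).cos
    have hR : HasDerivAt (fun s' => eF (A s') (Q t)) (eF (A' s) (Q t) + eF (A s) 0) s :=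
      hasDerivAt_eF (hAD s) (hasDerivAt_const s (Q t))
    have heq : (fun s' => Real.cos (u (s', t))) = fun s' => eF (A s') (Q t) :=
      funext fun s' => h1 s' t
    rw [heq] at hL
    have := hL.unique hR
    rw [eF_zero_right] at this
    linarith [this]
  -- gradient bound
  have h6 : ∀ s t : ℝ, (usF (s, t))^2 ≤ eF (A' s) (A' s) := by
    intro s t
    have hsin : 0 < Real.sin (u (s, t)) :=
      Real.sin_pos_of_pos_of_lt_pi (hrange s t).1 (hrange s t).2
    set c : ℝ := Real.cos (u (s, t)) with hc
    have hZ : eF (Q t - c • A s) (Q t - c • A s) = Real.sin (u (s, t))^2 := by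
      rw [eF_expand, h3 t, h2 s, eF_symm (Q t) (A s), ← h1 s t, ← hc]
      rw [Real.sin_sq]
      ring
    have hsplit : eF (A' s) (Q t) = eF (A' s) (Q t - c • A s) := by
      rw [eF_sub_right, eF_smul_right, eF_symm (A' s) (A s), h4 s]
      ring
    have hCS := eF_sq_le (A' s) (Q t - c • A s)
    rw [hZ] at hCS
    have h5' := h5 s t
    have : (Real.sin (u (s, t)) * usF (s, t))^2 = (eF (A' s) (Q t))^2 := by
      rw [h5']; ring
    rw [hsplit] at this
    have hkey : Real.sin (u (s, t))^2 * (usF (s, t))^2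
        ≤ eF (A' s) (A' s) * Real.sin (u (s, t))^2 := by
      nlinarith [hCS, this]
    have hs2 : 0 < Real.sin (u (s, t))^2 := by positivity
    nlinarith [hkey, hs2]
  -- mixed second derivative via Schwarz and hcurv
  have h7 : ∀ s t : ℝ, HasDerivAt (fun s' => utF (s', t)) (-K * Real.sin (u (s, t))) s := by
    intro s t
    have h := schwarz_slice hu s t
    have heq : (fun t' => usF (s, t')) = fun t' => deriv (fun s' => u (s', t')) s :=
      funext fun t' => ((hus s t').deriv).symm
    have : deriv (fun t' => usF (s, t')) t = -K * Real.sin (u (s, t)) := by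
      rw [heq, hcurv s t]
    rw [husF, hutF] at *
    rw [← this]
    exact h
  -- FTC in s
  have hsin_cont : ∀ t : ℝ, Continuous fun s => Real.sin (u (s, t)) := by
    intro t
    exact Real.continuous_sin.comp (hu.continuous.comp (continuous_id.prodMk continuous_const))
  have h8 : ∀ (t s₀ s₁ : ℝ), utF (s₁, t) - utF (s₀, t)
      = -K * ∫ s in s₀..s₁, Real.sin (u (s, t)) := by
    intro t s₀ s₁
    have hint : IntervalIntegrable (fun s => -K * Real.sin (u (s, t)))
        MeasureTheory.volume s₀ s₁ :=
      (Continuous.intervalIntegrable (by continuity) s₀ s₁)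
    have := intervalIntegral.integral_eq_sub_of_hasDerivAt
      (f := fun s => utF (s, t)) (f' := fun s => -K * Real.sin (u (s, t)))
      (fun s _ => h7 s t) hint
    have h9 : (∫ s in s₀..s₁, -K * Real.sin (u (s, t))) = utF (s₁, t) - utF (s₀, t) := this
    rw [← h9, intervalIntegral.integral_const_mul]
  -- MAIN CLAIM
  have claim : ∀ s₀ s₁ : ℝ, s₀ < s₁ → ∀ s ∈ Set.Icc s₀ s₁, A s = A s₀ := by
    intro s₀ s₁ h01
    -- continuity facts
    have hAcont : Continuous A := (ha.continuous.matrix_conjTranspose).matrix_mul ha1.continuous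
    have ha2 : ContDiff ℝ (∞ : WithTop ℕ∞) (deriv (deriv a)) := (contDiff_infty_iff_deriv.mp ha1).2
    have hA'cont : Continuous A' := by
      apply Continuous.add
      · exact (ha1.continuous.matrix_conjTranspose).matrix_mul ha1.continuous
      · exact (ha.continuous.matrix_conjTranspose).matrix_mul ha2.continuous
    have hgcont : Continuous fun s => Real.sqrt (eF (A' s) (A' s)) := by
      apply Real.continuous_sqrt.comp
      exact Complex.continuous_re.comp
        ((hA'cont.matrix_conjTranspose.matrix_mul hA'cont).matrix_trace)
    obtain ⟨sM, hsM, hmax'⟩ := isCompact_Icc.exists_isMaxOn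
      (Set.nonempty_Icc.mpr h01.le) hgcont.continuousOn
    have hmax : ∀ s ∈ Set.Icc s₀ s₁,
        Real.sqrt (eF (A' s) (A' s)) ≤ Real.sqrt (eF (A' sM) (A' sM)) :=
      fun s hs => hmax' hs
    set M : ℝ := Real.sqrt (eF (A' sM) (A' sM)) + 1 with hMdef
    have hM0 : 0 < M := by positivity
    have husb : ∀ t : ℝ, ∀ s ∈ Set.Icc s₀ s₁, |usF (s, t)| ≤ M := by
      intro t s hs
      have h6' := h6 s t
      have hb1 : |usF (s, t)| ≤ Real.sqrt (eF (A' s) (A' s)) := by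
        rw [← Real.sqrt_sq_eq_abs]
        exact Real.sqrt_le_sqrt h6'
      have hb2 := le_trans hb1 (hmax s hs)
      linarith
    -- smallness of sin u along some horizontal line
    have small : ∀ ε : ℝ, 0 < ε → ∃ t : ℝ, ∀ s ∈ Set.Icc s₀ s₁, Real.sin (u (s, t)) < ε := by
      intro ε hε
      set δ : ℝ := ε / 2 * min ((s₁ - s₀) / 2) (ε / (2 * M)) with hδdef
      have hδ : 0 < δ := by
        apply mul_pos (by linarith)
        exact lt_min (by linarith) (by positivity)
      have ht : ∃ t : ℝ, (∫ s in s₀..s₁, Real.sin (u (s, t))) < δ := by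
        by_contra hcon
        push_neg at hcon
        have hGd : ∀ t : ℝ, HasDerivAt (fun t' => u (s₁, t') - u (s₀, t'))
            (utF (s₁, t) - utF (s₀, t)) t := fun t => (hut s₁ t).sub (hut s₀ t)
        have hGbd : ∀ t : ℝ, |u (s₁, t) - u (s₀, t)| ≤ Real.pi := by
          intro t
          rw [abs_le]
          constructor
          · linarith [(hrange s₁ t).1, (hrange s₀ t).2]
          · linarith [(hrange s₁ t).2, (hrange s₀ t).1]
        rcases lt_or_gt_of_ne hK0 with hKneg | hKpos
        · have hc : 0 < -K * δ := by nlinarith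
          apply no_escape hGd hGbd hc
          intro t
          rw [h8 t s₀ s₁]
          have hI := hcon t
          nlinarith [hI]
        · have hGd' : ∀ t : ℝ, HasDerivAt (fun t' => -(u (s₁, t') - u (s₀, t')))
              (-(utF (s₁, t) - utF (s₀, t))) t := fun t => (hGd t).neg
          have hGbd' : ∀ t : ℝ, |(-(u (s₁, t) - u (s₀, t)))| ≤ Real.pi := by
            intro t; rw [abs_neg]; exact hGbd t
          have hc : 0 < K * δ := by nlinarith
          apply no_escape hGd' hGbd' hc
          intro t
          rw [h8 t s₀ s₁]
          have hI := hcon t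
          nlinarith [hI]
      obtain ⟨t, htδ⟩ := ht
      refine ⟨t, ?_⟩
      intro s hs
      by_contra hbig
      push_neg at hbig
      have hlb := integral_lower_bound (f := fun x => Real.sin (u (x, t)))
        (f' := fun x => Real.cos (u (x, t)) * usF (x, t)) h01 hs hM0 hε
        (fun x => (hus x t).sin)
        (fun x hx => by
          rw [abs_mul]
          calc |Real.cos (u (x, t))| * |usF (x, t)| ≤ 1 * |usF (x, t)| :=
                mul_le_mul_of_nonneg_right (Real.abs_cos_le_one _) (abs_nonneg _)
            _ = |usF (x, t)| := one_mul _
            _ ≤ M := husb t x hx)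
        (fun x _ => Real.sin_nonneg_of_nonneg_of_le_pi (hrange x t).1.le (hrange x t).2.le)
        hbig
      have hfin : δ ≤ ∫ x in s₀..s₁, Real.sin (u (x, t)) := hlb
      linarith
    -- the inner product is ±1 on the interval
    have hsq : ∀ s ∈ Set.Icc s₀ s₁, (eF (A s₀) (A s))^2 = 1 := by
      intro s hs
      have habs : |eF (A s₀) (A s)| ≤ 1 := by
        have hcs := eF_sq_le (A s₀) (A s)
        rw [h2, h2] at hcs
        have hcs' : (eF (A s₀) (A s))^2 ≤ 1 := by simpa using hcs
        rw [abs_le]; constructor <;> nlinarith [hcs']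
      have hge : ∀ ε : ℝ, 0 < ε → ε ≤ 1 → 1 - 2 * ε^2 ≤ |eF (A s₀) (A s)| := by
        intro ε hε hε1
        obtain ⟨t, ht⟩ := small ε hε
        have hσ0 := ht s₀ ⟨le_refl s₀, h01.le⟩
        have hσ1 := ht s hs
        have hσ0nn : 0 ≤ Real.sin (u (s₀, t)) :=
          Real.sin_nonneg_of_nonneg_of_le_pi (hrange s₀ t).1.le (hrange s₀ t).2.le
        have hσ1nn : 0 ≤ Real.sin (u (s, t)) :=
          Real.sin_nonneg_of_nonneg_of_le_pi (hrange s t).1.le (hrange s t).2.le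
        have hc0 : eF (A s₀) (Q t) = Real.cos (u (s₀, t)) := (h1 s₀ t).symm
        have hc1 : eF (A s) (Q t) = Real.cos (u (s, t)) := (h1 s t).symm
        have hc0' : eF (Q t) (A s₀) = Real.cos (u (s₀, t)) := by rw [eF_symm]; exact hc0
        have hc1' : eF (Q t) (A s) = Real.cos (u (s, t)) := by rw [eF_symm]; exact hc1
        have hexp : eF (A s₀ - Real.cos (u (s₀, t)) • Q t) (A s - Real.cos (u (s, t)) • Q t)
            = eF (A s₀) (A s) - Real.cos (u (s₀, t)) * Real.cos (u (s, t)) := by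
          rw [eF_expand, hc0, hc1', h3]
          ring
        have hn0 : eF (A s₀ - Real.cos (u (s₀, t)) • Q t) (A s₀ - Real.cos (u (s₀, t)) • Q t)
            = Real.sin (u (s₀, t))^2 := by
          rw [eF_expand, h2, h3, hc0, hc0', Real.sin_sq]
          ring
        have hn1 : eF (A s - Real.cos (u (s, t)) • Q t) (A s - Real.cos (u (s, t)) • Q t)
            = Real.sin (u (s, t))^2 := by
          rw [eF_expand, h2, h3, hc1, hc1', Real.sin_sq]
          ring
        have hCS := eF_sq_le (A s₀ - Real.cos (u (s₀, t)) • Q t)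
          (A s - Real.cos (u (s, t)) • Q t)
        rw [hexp, hn0, hn1] at hCS
        have hmid : |eF (A s₀) (A s) - Real.cos (u (s₀, t)) * Real.cos (u (s, t))|
            ≤ Real.sin (u (s₀, t)) * Real.sin (u (s, t)) := by
          rw [← Real.sqrt_sq_eq_abs]
          calc Real.sqrt ((eF (A s₀) (A s)
                - Real.cos (u (s₀, t)) * Real.cos (u (s, t)))^2)
              ≤ Real.sqrt (Real.sin (u (s₀, t))^2 * Real.sin (u (s, t))^2) :=
                Real.sqrt_le_sqrt hCS
            _ = Real.sqrt ((Real.sin (u (s₀, t)) * Real.sin (u (s, t)))^2) := by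
                rw [mul_pow]
            _ = Real.sin (u (s₀, t)) * Real.sin (u (s, t)) :=
                Real.sqrt_sq (by positivity)
        have he0 : Real.cos (u (s₀, t))^2 = 1 - Real.sin (u (s₀, t))^2 := Real.cos_sq' _
        have he1 : Real.cos (u (s, t))^2 = 1 - Real.sin (u (s, t))^2 := Real.cos_sq' _
        have hcc : 1 - ε^2 ≤ |Real.cos (u (s₀, t)) * Real.cos (u (s, t))| := by
          have k0 : 1 - ε^2 ≤ Real.cos (u (s₀, t))^2 := by
            rw [he0]; nlinarith [hσ0, hσ0nn]
          have k1 : 1 - ε^2 ≤ Real.cos (u (s, t))^2 := by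
            rw [he1]; nlinarith [hσ1, hσ1nn]
          have knn : (0:ℝ) ≤ 1 - ε^2 := by nlinarith [hε1, hε.le]
          have hq : (1 - ε^2)^2 ≤ (Real.cos (u (s₀, t)) * Real.cos (u (s, t)))^2 := by
            have hmm := mul_le_mul k0 k1 knn (sq_nonneg (Real.cos (u (s₀, t))))
            nlinarith [hmm]
          calc (1:ℝ) - ε^2 = Real.sqrt ((1 - ε^2)^2) := by
                rw [Real.sqrt_sq (by nlinarith [hε1])]
            _ ≤ Real.sqrt ((Real.cos (u (s₀, t)) * Real.cos (u (s, t)))^2) :=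
                Real.sqrt_le_sqrt hq
            _ = |Real.cos (u (s₀, t)) * Real.cos (u (s, t))| := Real.sqrt_sq_eq_abs _
        have htri := abs_sub_abs_le_abs_sub (Real.cos (u (s₀, t)) * Real.cos (u (s, t)))
          (Real.cos (u (s₀, t)) * Real.cos (u (s, t)) - eF (A s₀) (A s))
        have habs2 : |Real.cos (u (s₀, t)) * Real.cos (u (s, t)) - eF (A s₀) (A s)|
            = |eF (A s₀) (A s) - Real.cos (u (s₀, t)) * Real.cos (u (s, t))| := abs_sub_comm _ _
        have hsimp : Real.cos (u (s₀, t)) * Real.cos (u (s, t))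
            - (Real.cos (u (s₀, t)) * Real.cos (u (s, t)) - eF (A s₀) (A s))
            = eF (A s₀) (A s) := by ring
        rw [hsimp, habs2] at htri
        have hσσ : Real.sin (u (s₀, t)) * Real.sin (u (s, t)) ≤ ε^2 := by
          have := mul_le_mul hσ0.le hσ1.le hσ1nn hε.le
          nlinarith [this]
        linarith [htri, hcc, hmid, hσσ]
      have h1E : 1 ≤ |eF (A s₀) (A s)| := by
        by_contra hlt
        push_neg at hlt
        have hpos : 0 < (1 - |eF (A s₀) (A s)|)/4 := by linarith
        have hε : 0 < Real.sqrt ((1 - |eF (A s₀) (A s)|)/4) := Real.sqrt_pos.mpr hpos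
        have hε1 : Real.sqrt ((1 - |eF (A s₀) (A s)|)/4) ≤ 1 := by
          rw [show (1:ℝ) = Real.sqrt 1 from (Real.sqrt_one).symm]
          apply Real.sqrt_le_sqrt
          have := abs_nonneg (eF (A s₀) (A s))
          rw [Real.sqrt_one]
          linarith
        have hsq' : (Real.sqrt ((1 - |eF (A s₀) (A s)|)/4))^2
            = (1 - |eF (A s₀) (A s)|)/4 := Real.sq_sqrt hpos.le
        have := hge _ hε hε1
        rw [hsq'] at this
        linarith
      have habs1 : |eF (A s₀) (A s)| = 1 := le_antisymm habs h1E
      rw [← sq_abs, habs1]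
      norm_num
    -- IVT: the inner product is identically 1
    intro s hs
    have hEcont : Continuous fun x => eF (A s₀) (A x) := by
      exact Complex.continuous_re.comp
        (((continuous_const).matrix_mul hAcont).matrix_trace)
    have hone : eF (A s₀) (A s) = 1 := by
      have hsqs := hsq s hs
      have hfact : (eF (A s₀) (A s) - 1) * (eF (A s₀) (A s) + 1) = 0 := by nlinarith
      rcases mul_eq_zero.mp hfact with h' | h'
      · linarith
      · exfalso
        have hsub : Set.Icc s₀ s ⊆ Set.Icc s₀ s₁ := Set.Icc_subset_Icc (le_refl _) hs.2
        have hiv := intermediate_value_Icc' hs.1 (hEcont.continuousOn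
          (s := Set.Icc s₀ s))
        have h0mem : (0:ℝ) ∈ Set.Icc (eF (A s₀) (A s)) (eF (A s₀) (A s₀)) := by
          rw [h2 s₀]
          constructor
          · linarith
          · norm_num
        obtain ⟨σ, hσmem, hσ0⟩ := hiv h0mem
        have hσ0' : eF (A s₀) (A σ) = 0 := hσ0
        have hs2 := hsq σ (hsub hσmem)
        rw [hσ0'] at hs2
        norm_num at hs2
    have hzero : eF (A s - A s₀) (A s - A s₀) = 0 := by
      rw [eF_sub_left, eF_sub_right, eF_sub_right, h2, h2, eF_symm (A s) (A s₀), hone]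
      ring
    exact sub_eq_zero.mp (eF_self_eq_zero hzero)
  -- A is constant
  have hAconst : ∀ s : ℝ, A s = A 0 := by
    intro s
    rcases lt_trichotomy s 0 with h | h | h
    · exact (claim s 0 h 0 ⟨h.le, le_refl 0⟩).symm
    · rw [h]
    · exact claim 0 s h s ⟨h.le, le_refl s⟩
  -- u is independent of s
  have hucst : ∀ s t : ℝ, u (s, t) = u (0, t) := by
    intro s t
    have e1 : Real.cos (u (s, t)) = Real.cos (u (0, t)) := by
      rw [h1 s t, h1 0 t, hAconst s]
    have hmem : ∀ s : ℝ, u (s, t) ∈ Set.Icc 0 Real.pi :=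
      fun s => ⟨(hrange s t).1.le, (hrange s t).2.le⟩
    exact Real.injOn_cos (hmem s) (hmem 0) e1
  -- conclude K = 0
  have hzero : ∀ s t : ℝ, deriv (fun t' => deriv (fun s' => u (s', t')) s) t = 0 := by
    intro s t
    have : (fun t' => deriv (fun s' => u (s', t')) s) = fun _ => (0 : ℝ) := by
      funext t'
      have : (fun s' => u (s', t')) = fun _ => u (0, t') := funext fun s' => hucst s' t'
      rw [this, deriv_const]
    rw [this, deriv_const]
  have := hcurv 1 1
  rw [hzero 1 1] at this
  have hsin : 0 < Real.sin (u (1, 1)) :=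
    Real.sin_pos_of_pos_of_lt_pi (hrange 1 1).1 (hrange 1 1).2
  have : K = 0 := by
    have h := this.symm
    rcases mul_eq_zero.mp h with h' | h'
    · linarith [h']
    · linarith [h', hsin]
  exact hK0 this
end

section
/- Let K be a nonzero real constant. Suppose ξ, τ : ℝ → ℝ are smooth functions and η : ℝ × ℝ × ℝ → ℝ is a smooth function (of variables (s, t, u)) such that for all s, t ∈ ℝ and all u ∈ (0, π) the determining equations hold: (i) ∂²η/∂u² = 0; (ii) ∂²η/∂t∂u = 0; (iii) ∂²η/∂u∂s = 0; (iv) ∂²η/∂s∂t − K·(∂η/∂u)·sin(u) + K·η·cos(u) + K·ξ'(s)·sin(u) + K·τ'(t)·sin(u) = 0. Then η(s,t,u) = 0 for all s, t and u ∈ (0,π), and there exist real constants A, B, D such that ξ(s) = A·s + B and τ(t) = −A·t + D for all s, t. -/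
private lemma constOn_Ioo {f : ℝ → ℝ} (hf : Differentiable ℝ f) {a b x y : ℝ}
    (h : ∀ z ∈ Set.Ioo a b, deriv f z = 0) (hx : x ∈ Set.Ioo a b) (hy : y ∈ Set.Ioo a b) :
    f x = f y := by
  refine (convex_Ioo a b).is_const_of_fderivWithin_eq_zero hf.differentiableOn
    (fun z hz => ?_) hx hy
  rw [fderivWithin_of_isOpen isOpen_Ioo hz]
  ext
  simp [← toSpanSingleton_deriv, h z hz]

private lemma sg_alg (q p G m x y : ℝ) (hq : q ^ 2 = 3) (hq0 : 0 ≤ q) (hp : 0 < p)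
    (e1 : G + m = 0)
    (e2 : G + m * (q / 2) + x * (1 / 2) + y * (p / 3) * (1 / 2) = 0)
    (e3 : G + m * (q / 2) - x * (1 / 2) - y * (2 * p / 3) * (1 / 2) = 0)
    (e4 : G + m * (1 / 2) + x * (q / 2) + y * (p / 6) * (q / 2) = 0) :
    y = 0 ∧ x = 0 ∧ m = 0 := by
  have hx : x + (p / 2) * y = 0 := by linear_combination e2 - e3
  have hm2 : m + (q * p / 3) * y = 0 := by linear_combination 2 * e1 - 2 * e4 + q * hx
  have hm1 : (q - 2) * m - (p / 6) * y = 0 := by linear_combination e2 + e3 - 2 * e1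
  have hy : (4 * q - 7) * p * y = 0 := by
    linear_combination 6 * hm1 - (6 * (q - 2)) * hm2 + (2 * p * y) * hq
  have hfac : (4 * q - 7) * p < 0 := by nlinarith
  have hy0 : y = 0 := by
    rcases mul_eq_zero.mp hy with h | h
    · exact absurd h (ne_of_lt hfac)
    · exact h
  refine ⟨hy0, ?_, ?_⟩
  · rw [hy0, mul_zero, add_zero] at hx; exact hx
  · rw [hy0, mul_zero, add_zero] at hm2; exact hm2

/-- For `K ≠ 0`, any solution `(ξ(s), τ(t), η(s,t,u))` of the determining equations
(26c)–(26f) of the symmetry group of `u_{st} + K sin u = 0` (with `u` valued in `(0, π)`)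
satisfies `η ≡ 0`, `ξ(s) = A·s + B` and `τ(t) = −A·t + D` for some constants `A, B, D`. -/
theorem stmt_3 (K : ℝ) (hK : K ≠ 0) (ξ τ : ℝ → ℝ) (η : ℝ × ℝ × ℝ → ℝ)
    (hξ : ContDiff ℝ (⊤ : ℕ∞) ξ) (hτ : ContDiff ℝ (⊤ : ℕ∞) τ) (hη : ContDiff ℝ (⊤ : ℕ∞) η)
    (huu : ∀ (s t : ℝ), ∀ u ∈ Set.Ioo (0 : ℝ) Real.pi,
      deriv (fun u' => deriv (fun u'' => η (s, t, u'')) u') u = 0)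
    (htu : ∀ (s t : ℝ), ∀ u ∈ Set.Ioo (0 : ℝ) Real.pi,
      deriv (fun t' => deriv (fun u' => η (s, t', u')) u) t = 0)
    (hus : ∀ (s t : ℝ), ∀ u ∈ Set.Ioo (0 : ℝ) Real.pi,
      deriv (fun s' => deriv (fun u' => η (s', t, u')) u) s = 0)
    (hst : ∀ (s t : ℝ), ∀ u ∈ Set.Ioo (0 : ℝ) Real.pi,
      deriv (fun s' => deriv (fun t' => η (s', t', u)) t) s
        - K * deriv (fun u' => η (s, t, u')) u * Real.sin u
        + K * η (s, t, u) * Real.cos u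
        + K * deriv ξ s * Real.sin u
        + K * deriv τ t * Real.sin u = 0) :
    (∀ (s t : ℝ), ∀ u ∈ Set.Ioo (0 : ℝ) Real.pi, η (s, t, u) = 0) ∧
      ∃ A B D : ℝ, (∀ s : ℝ, ξ s = A * s + B) ∧ (∀ t : ℝ, τ t = -A * t + D) := by
  have hπ := Real.pi_gt_three
  have m2 : Real.pi / 2 ∈ Set.Ioo (0 : ℝ) Real.pi := ⟨by linarith, by linarith⟩
  have m3 : Real.pi / 3 ∈ Set.Ioo (0 : ℝ) Real.pi := ⟨by linarith, by linarith⟩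
  have m6 : Real.pi / 6 ∈ Set.Ioo (0 : ℝ) Real.pi := ⟨by linarith, by linarith⟩
  have m23 : Real.pi - Real.pi / 3 ∈ Set.Ioo (0 : ℝ) Real.pi := ⟨by linarith, by linarith⟩
  -- derivative of the u-slice
  have keyU : ∀ s t u : ℝ, HasDerivAt (fun u' => η (s, t, u'))
      (fderiv ℝ η (s, t, u) ((0 : ℝ), (0 : ℝ), (1 : ℝ))) u := by
    intro s t u
    have h1 : HasDerivAt (fun u' : ℝ => ((s, t, u') : ℝ × ℝ × ℝ))
        (((0 : ℝ), (0 : ℝ), (1 : ℝ))) u :=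
      (hasDerivAt_const u s).prodMk ((hasDerivAt_const u t).prodMk (hasDerivAt_id u))
    exact ((hη.differentiable (by simp) (s, t, u)).hasFDerivAt).comp_hasDerivAt u h1
  have hPc : ContDiff ℝ (⊤ : ℕ∞) (fun w : ℝ × ℝ × ℝ => fderiv ℝ η w ((0 : ℝ), (0 : ℝ), (1 : ℝ))) :=
    (hη.fderiv_right (by simp)).clm_apply contDiff_const
  have hPdiff_u : ∀ s t : ℝ,
      Differentiable ℝ (fun u : ℝ => fderiv ℝ η (s, t, u) ((0 : ℝ), (0 : ℝ), (1 : ℝ))) :=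
    fun s t =>
      (hPc.comp (contDiff_const.prodMk (contDiff_const.prodMk contDiff_id))).differentiable (by simp)
  have hPdiff_t : ∀ s u : ℝ,
      Differentiable ℝ (fun t : ℝ => fderiv ℝ η (s, t, u) ((0 : ℝ), (0 : ℝ), (1 : ℝ))) :=
    fun s u =>
      (hPc.comp (contDiff_const.prodMk (contDiff_id.prodMk contDiff_const))).differentiable (by simp)
  have hPdiff_s : ∀ t u : ℝ,
      Differentiable ℝ (fun s : ℝ => fderiv ℝ η (s, t, u) ((0 : ℝ), (0 : ℝ), (1 : ℝ))) :=
    fun t u =>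
      (hPc.comp (contDiff_id.prodMk (contDiff_const.prodMk contDiff_const))).differentiable (by simp)
  obtain ⟨c, hc⟩ : ∃ c : ℝ,
      fderiv ℝ η (0, 0, Real.pi / 2) ((0 : ℝ), (0 : ℝ), (1 : ℝ)) = c := ⟨_, rfl⟩
  have hPt : ∀ s t : ℝ, fderiv ℝ η (s, t, Real.pi / 2) ((0 : ℝ), (0 : ℝ), (1 : ℝ))
      = fderiv ℝ η (s, 0, Real.pi / 2) ((0 : ℝ), (0 : ℝ), (1 : ℝ)) := by
    intro s t
    have hz : ∀ t' : ℝ,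
        deriv (fun t'' : ℝ => fderiv ℝ η (s, t'', Real.pi / 2) ((0:ℝ),(0:ℝ),(1:ℝ))) t' = 0 := by
      intro t'
      have he : (fun t'' : ℝ => deriv (fun u' => η (s, t'', u')) (Real.pi / 2))
          = fun t'' : ℝ => fderiv ℝ η (s, t'', Real.pi / 2) ((0:ℝ),(0:ℝ),(1:ℝ)) :=
        funext fun t'' => (keyU s t'' (Real.pi / 2)).deriv
      have h0 := htu s t' (Real.pi / 2) m2
      rwa [he] at h0
    exact is_const_of_deriv_eq_zero (hPdiff_t s (Real.pi / 2)) hz t 0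
  have hPs : ∀ s : ℝ, fderiv ℝ η (s, 0, Real.pi / 2) ((0 : ℝ), (0 : ℝ), (1 : ℝ)) = c := by
    intro s
    rw [← hc]
    have hz : ∀ s' : ℝ,
        deriv (fun s'' : ℝ => fderiv ℝ η (s'', 0, Real.pi / 2) ((0:ℝ),(0:ℝ),(1:ℝ))) s' = 0 := by
      intro s'
      have he : (fun s'' : ℝ => deriv (fun u' => η (s'', 0, u')) (Real.pi / 2))
          = fun s'' : ℝ => fderiv ℝ η (s'', 0, Real.pi / 2) ((0:ℝ),(0:ℝ),(1:ℝ)) :=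
        funext fun s'' => (keyU s'' 0 (Real.pi / 2)).deriv
      have h0 := hus s' 0 (Real.pi / 2) m2
      rwa [he] at h0
    exact is_const_of_deriv_eq_zero (hPdiff_s 0 (Real.pi / 2)) hz s 0
  have hPmid : ∀ s t : ℝ, fderiv ℝ η (s, t, Real.pi / 2) ((0 : ℝ), (0 : ℝ), (1 : ℝ)) = c :=
    fun s t => (hPt s t).trans (hPs s)
  have hPu : ∀ s t : ℝ, ∀ u ∈ Set.Ioo (0 : ℝ) Real.pi,
      fderiv ℝ η (s, t, u) ((0 : ℝ), (0 : ℝ), (1 : ℝ)) = c := by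
    intro s t u hu
    have he : (fun u' : ℝ => deriv (fun u'' => η (s, t, u'')) u')
        = fun u' : ℝ => fderiv ℝ η (s, t, u') ((0:ℝ),(0:ℝ),(1:ℝ)) :=
      funext fun u' => (keyU s t u').deriv
    have hz : ∀ z ∈ Set.Ioo (0 : ℝ) Real.pi,
        deriv (fun u' : ℝ => fderiv ℝ η (s, t, u') ((0:ℝ),(0:ℝ),(1:ℝ))) z = 0 := by
      intro z hz'
      rw [← he]
      exact huu s t z hz'
    have h0 := constOn_Ioo (hPdiff_u s t) hz hu m2
    rw [h0]
    exact hPmid s t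
  have hder : ∀ s t : ℝ, ∀ u ∈ Set.Ioo (0 : ℝ) Real.pi,
      deriv (fun u' => η (s, t, u')) u = c :=
    fun s t u hu => (keyU s t u).deriv.trans (hPu s t u hu)
  -- affine in u
  have hb : ∀ s t : ℝ, ∀ u ∈ Set.Ioo (0 : ℝ) Real.pi,
      η (s, t, u) = η (s, t, Real.pi / 2) + c * (u - Real.pi / 2) := by
    intro s t u hu
    have hfd : Differentiable ℝ (fun u' : ℝ => η (s, t, u') - c * u') :=
      ((hη.comp (contDiff_const.prodMk (contDiff_const.prodMk contDiff_id))).differentiable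
        (by simp)).sub (differentiable_id.const_mul c)
    have hz : ∀ z ∈ Set.Ioo (0 : ℝ) Real.pi,
        deriv (fun u' : ℝ => η (s, t, u') - c * u') z = 0 := by
      intro z hz'
      have h1 : HasDerivAt (fun u' : ℝ => η (s, t, u') - c * u')
          (fderiv ℝ η (s, t, z) ((0:ℝ),(0:ℝ),(1:ℝ)) - c * 1) z :=
        (keyU s t z).sub ((hasDerivAt_id z).const_mul c)
      rw [h1.deriv, hPu s t z hz']
      ring
    have h0 : η (s, t, u) - c * u = η (s, t, Real.pi / 2) - c * (Real.pi / 2) :=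
      constOn_Ioo hfd hz hu m2
    linarith
  -- main algebraic step
  have key : ∀ s t : ℝ, K * c = 0 ∧ K * η (s, t, Real.pi / 2) - K * c * (Real.pi / 2) = 0 ∧
      K * deriv ξ s + K * deriv τ t - K * c = 0 := by
    intro s t
    have hmix : ∀ u ∈ Set.Ioo (0 : ℝ) Real.pi,
        deriv (fun s' => deriv (fun t' => η (s', t', u)) t) s
          = deriv (fun s' => deriv (fun t' => η (s', t', Real.pi / 2)) t) s := by
      intro u hu
      have h2 : (fun s' => deriv (fun t' => η (s', t', u)) t)
          = fun s' => deriv (fun t' => η (s', t', Real.pi / 2)) t := by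
        funext s'
        have h1 : (fun t' => η (s', t', u))
            = fun t' => η (s', t', Real.pi / 2) + c * (u - Real.pi / 2) :=
          funext fun t' => hb s' t' u hu
        rw [h1, deriv_add_const]
      rw [h2]
    obtain ⟨G, hG⟩ : ∃ G : ℝ,
        deriv (fun s' => deriv (fun t' => η (s', t', Real.pi / 2)) t) s = G := ⟨_, rfl⟩
    have E : ∀ u ∈ Set.Ioo (0 : ℝ) Real.pi,
        G - K * c * Real.sin u
          + K * (η (s, t, Real.pi / 2) + c * (u - Real.pi / 2)) * Real.cos u
          + K * deriv ξ s * Real.sin u + K * deriv τ t * Real.sin u = 0 := by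
      intro u hu
      have h0 := hst s t u hu
      rw [hmix u hu, hG, hder s t u hu, hb s t u hu] at h0
      exact h0
    have e1 := E (Real.pi / 2) m2
    rw [Real.sin_pi_div_two, Real.cos_pi_div_two] at e1
    have e2 := E (Real.pi / 3) m3
    rw [Real.sin_pi_div_three, Real.cos_pi_div_three] at e2
    have e3 := E (Real.pi - Real.pi / 3) m23
    rw [Real.sin_pi_sub, Real.cos_pi_sub, Real.sin_pi_div_three, Real.cos_pi_div_three] at e3
    have e4 := E (Real.pi / 6) m6
    rw [Real.sin_pi_div_six, Real.cos_pi_div_six] at e4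
    have hq : Real.sqrt 3 ^ 2 = 3 := Real.sq_sqrt (by norm_num)
    obtain ⟨hy0, hx0, hm0⟩ := sg_alg (Real.sqrt 3) Real.pi G
      (K * deriv ξ s + K * deriv τ t - K * c)
      (K * η (s, t, Real.pi / 2) - K * c * (Real.pi / 2)) (K * c)
      hq (Real.sqrt_nonneg 3) Real.pi_pos
      (by linear_combination e1) (by linear_combination e2)
      (by linear_combination e3) (by linear_combination e4)
    exact ⟨hy0, hx0, hm0⟩
  have hc0 : c = 0 := (mul_eq_zero.mp (key 0 0).1).resolve_left hK
  constructor
  · intro s t u hu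
    have hB : η (s, t, Real.pi / 2) = 0 := by
      have h2 := (key s t).2.1
      have h3 : K * η (s, t, Real.pi / 2) = 0 := by
        rw [hc0] at h2; linear_combination h2
      exact (mul_eq_zero.mp h3).resolve_left hK
    rw [hb s t u hu, hB, hc0]
    ring
  · have hsum : ∀ s t : ℝ, deriv ξ s + deriv τ t = 0 := by
      intro s t
      have h2 := (key s t).2.2
      have h3 : K * (deriv ξ s + deriv τ t) = 0 := by
        rw [hc0] at h2; linear_combination h2
      exact (mul_eq_zero.mp h3).resolve_left hK
    refine ⟨deriv ξ 0, ξ 0, τ 0, ?_, ?_⟩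
    · intro s
      have hA : ∀ s', deriv ξ s' = deriv ξ 0 := by
        intro s'
        have h1 := hsum s' 0
        have h2 := hsum 0 0
        linarith
      have hdiff : Differentiable ℝ (fun s' => ξ s' - deriv ξ 0 * s') :=
        (hξ.differentiable (by simp)).sub (differentiable_id.const_mul (deriv ξ 0))
      have hz : ∀ s', deriv (fun s'' => ξ s'' - deriv ξ 0 * s'') s' = 0 := by
        intro s'
        have h1 : HasDerivAt (fun s'' => ξ s'' - deriv ξ 0 * s'')
            (deriv ξ s' - deriv ξ 0 * 1) s' :=
          ((hξ.differentiable (by simp) s').hasDerivAt).sub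
            ((hasDerivAt_id s').const_mul (deriv ξ 0))
        rw [h1.deriv, hA s']
        ring
      have h3 : ξ s - deriv ξ 0 * s = ξ 0 - deriv ξ 0 * 0 :=
        is_const_of_deriv_eq_zero hdiff hz s 0
      linarith
    · intro t
      have hA : ∀ t', deriv τ t' = -deriv ξ 0 := by
        intro t'
        have h1 := hsum 0 t'
        linarith
      have hdiff : Differentiable ℝ (fun t' => τ t' + deriv ξ 0 * t') :=
        (hτ.differentiable (by simp)).add (differentiable_id.const_mul (deriv ξ 0))
      have hz : ∀ t', deriv (fun t'' => τ t'' + deriv ξ 0 * t'') t' = 0 := by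
        intro t'
        have h1 : HasDerivAt (fun t'' => τ t'' + deriv ξ 0 * t'')
            (deriv τ t' + deriv ξ 0 * 1) t' :=
          ((hτ.differentiable (by simp) t').hasDerivAt).add
            ((hasDerivAt_id t').const_mul (deriv ξ 0))
        rw [h1.deriv, hA t']
        ring
      have h3 : τ t + deriv ξ 0 * t = τ 0 + deriv ξ 0 * 0 :=
        is_const_of_deriv_eq_zero hdiff hz t 0
      linarith
end

section
/- Let K be a nonzero real constant, α ∈ ℝ, let ξ, τ : ℝ → ℝ and β : ℝ × ℝ → ℝ be smooth functions, and suppose that for all s, t ∈ ℝ and all u ∈ (0, π): ∂²β/∂s∂t (s,t) − K·α·sin(u) + K·(α·u + β(s,t))·cos(u) + K·ξ'(s)·sin(u) + K·τ'(t)·sin(u) = 0. Then α = 0, β(s,t) = 0 for all s, t, ξ''(s) = 0 for all s, τ''(t) = 0 for all t, and ξ'(s) + τ'(t) = 0 for all s, t. -/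
/-- Equation (31) of the paper: if `K ≠ 0` and
`β_{st}(s,t) − K·α·sin u + K·(α·u + β(s,t))·cos u + K·ξ'(s)·sin u + K·τ'(t)·sin u = 0`
for all `s, t ∈ ℝ` and `u ∈ (0, π)`, then `α = 0`, `β ≡ 0`, `ξ'' ≡ 0`, `τ'' ≡ 0`,
and `ξ'(s) + τ'(t) = 0` for all `s, t`. -/
theorem stmt_5 (K : ℝ) (hK : K ≠ 0) (α : ℝ) (ξ τ : ℝ → ℝ) (β : ℝ × ℝ → ℝ)
    (hξ : ContDiff ℝ (⊤ : ℕ∞) ξ) (hτ : ContDiff ℝ (⊤ : ℕ∞) τ) (hβ : ContDiff ℝ (⊤ : ℕ∞) β)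
    (heq : ∀ (s t : ℝ), ∀ u ∈ Set.Ioo (0 : ℝ) Real.pi,
      deriv (fun s' => deriv (fun t' => β (s', t')) t) s
        - K * α * Real.sin u
        + K * (α * u + β (s, t)) * Real.cos u
        + K * deriv ξ s * Real.sin u
        + K * deriv τ t * Real.sin u = 0) :
    α = 0 ∧ (∀ s t : ℝ, β (s, t) = 0) ∧
      (∀ s : ℝ, deriv (deriv ξ) s = 0) ∧ (∀ t : ℝ, deriv (deriv τ) t = 0) ∧
      (∀ s t : ℝ, deriv ξ s + deriv τ t = 0) := by
  have hπ := Real.pi_pos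
  have hmem1 : Real.pi / 3 ∈ Set.Ioo (0 : ℝ) Real.pi := ⟨by linarith, by linarith⟩
  have hmem2 : Real.pi - Real.pi / 3 ∈ Set.Ioo (0 : ℝ) Real.pi := ⟨by linarith, by linarith⟩
  have hmem3 : Real.pi / 2 ∈ Set.Ioo (0 : ℝ) Real.pi := ⟨by linarith, by linarith⟩
  -- Step 1: β is the constant -α*π/2
  have hb : ∀ s t : ℝ, β (s, t) = -α * Real.pi / 2 := by
    intro s t
    have e1 := heq s t _ hmem1
    have e2 := heq s t _ hmem2
    rw [Real.sin_pi_sub, Real.cos_pi_sub] at e2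
    rw [Real.sin_pi_div_three, Real.cos_pi_div_three] at e1 e2
    have h : K * (α * Real.pi + 2 * β (s, t)) = 0 := by linarith
    have := (mul_eq_zero.mp h).resolve_left hK
    linarith
  -- Step 2: the mixed derivative of β is 0
  have hP : ∀ s t : ℝ, deriv (fun s' => deriv (fun t' => β (s', t')) t) s = 0 := by
    intro s t
    have h1 : (fun s' => deriv (fun t' => β (s', t')) t) = fun _ => (0 : ℝ) := by
      funext s'
      have h2 : (fun t' => β (s', t')) = fun _ => (-α * Real.pi / 2) :=
        funext fun t' => hb s' t'
      rw [h2, deriv_const]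
    rw [h1, deriv_const]
  -- Step 3: α = 0
  have hα : α = 0 := by
    have e1 := heq 0 0 _ hmem1
    have e3 := heq 0 0 _ hmem3
    rw [Real.sin_pi_div_three, Real.cos_pi_div_three] at e1
    rw [Real.sin_pi_div_two, Real.cos_pi_div_two] at e3
    rw [hP 0 0, hb 0 0] at e1 e3
    -- e3 : -K*α + K*ξ'(0) + K*τ'(0) = 0 (up to arrangement)
    have hD : K * deriv ξ 0 + K * deriv τ 0 = K * α := by linarith
    have h4 : K * α * Real.pi = 0 := by linear_combination (-12 : ℝ) * e1 + 6 * Real.sqrt 3 * hD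
    have h5 := (mul_eq_zero.mp h4).resolve_right (ne_of_gt hπ)
    exact (mul_eq_zero.mp h5).resolve_left hK
  have hb0 : ∀ s t : ℝ, β (s, t) = 0 := by
    intro s t; rw [hb s t, hα]; ring
  -- Step 4: ξ'(s) + τ'(t) = 0
  have hsum : ∀ s t : ℝ, deriv ξ s + deriv τ t = 0 := by
    intro s t
    have e3 := heq s t _ hmem3
    rw [Real.sin_pi_div_two, Real.cos_pi_div_two, hP s t, hb0 s t, hα] at e3
    have h : K * (deriv ξ s + deriv τ t) = 0 := by linarith
    exact (mul_eq_zero.mp h).resolve_left hK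
  refine ⟨hα, hb0, ?_, ?_, hsum⟩
  · intro s
    have h1 : deriv ξ = fun _ => -deriv τ 0 := by
      funext s'; have := hsum s' 0; linarith
    rw [h1, deriv_const]
  · intro t
    have h1 : deriv τ = fun _ => -deriv ξ 0 := by
      funext t'; have := hsum 0 t'; linarith
    rw [h1, deriv_const]
end

section
/- Let η : ℝ × ℝ × ℝ → ℝ be a smooth function of variables (s, t, u) such that for all s, t ∈ ℝ and all u ∈ (0, π): ∂²η/∂u² = 0, ∂²η/∂t∂u = 0, ∂²η/∂u∂s = 0, and ∂²η/∂s∂t = 0. Then there exist a real constant α and smooth functions γ : ℝ → ℝ and δ : ℝ → ℝ such that η(s, t, u) = α·u + γ(s) + δ(t) for all s, t ∈ ℝ and u ∈ (0, π). -/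
/-- Constancy on an interval from vanishing derivative there. -/
lemma const_of_deriv_zero_Ioo {a b : ℝ} (f : ℝ → ℝ) (hf : Differentiable ℝ f)
    (h : ∀ x ∈ Set.Ioo a b, deriv f x = 0) {x y : ℝ}
    (hx : x ∈ Set.Ioo a b) (hy : y ∈ Set.Ioo a b) : f x = f y := by
  refine (convex_Ioo a b).is_const_of_fderivWithin_eq_zero hf.differentiableOn
    (fun z hz => ?_) hx hy
  rw [fderivWithin_of_isOpen isOpen_Ioo hz]
  ext
  simp [← toSpanSingleton_deriv, h z hz]

/-- If a smooth function `η(s, t, u)` satisfies `η_{uu} = 0`, `η_{tu} = 0`, `η_{us} = 0` and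
`η_{st} = 0` for all `s, t ∈ ℝ` and `u ∈ (0, π)`, then there are a constant `α` and smooth
functions `γ, δ : ℝ → ℝ` with `η(s, t, u) = α·u + γ(s) + δ(t)` on `ℝ × ℝ × (0, π)`. -/
theorem stmt_6 (η : ℝ × ℝ × ℝ → ℝ) (hη : ContDiff ℝ (⊤ : ℕ∞) η)
    (huu : ∀ (s t : ℝ), ∀ u ∈ Set.Ioo (0 : ℝ) Real.pi,
      deriv (fun u' => deriv (fun u'' => η (s, t, u'')) u') u = 0)
    (htu : ∀ (s t : ℝ), ∀ u ∈ Set.Ioo (0 : ℝ) Real.pi,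
      deriv (fun t' => deriv (fun u' => η (s, t', u')) u) t = 0)
    (hus : ∀ (s t : ℝ), ∀ u ∈ Set.Ioo (0 : ℝ) Real.pi,
      deriv (fun s' => deriv (fun u' => η (s', t, u')) u) s = 0)
    (hst : ∀ (s t : ℝ), ∀ u ∈ Set.Ioo (0 : ℝ) Real.pi,
      deriv (fun s' => deriv (fun t' => η (s', t', u)) t) s = 0) :
    ∃ (α : ℝ) (γ δ : ℝ → ℝ), ContDiff ℝ (⊤ : ℕ∞) γ ∧ ContDiff ℝ (⊤ : ℕ∞) δ ∧
      ∀ (s t : ℝ), ∀ u ∈ Set.Ioo (0 : ℝ) Real.pi,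
        η (s, t, u) = α * u + γ s + δ t := by
  have hηd : Differentiable ℝ η := hη.differentiable (by simp)
  set D : ℝ × ℝ × ℝ → ℝ := fun p => fderiv ℝ η p (0, 0, 1) with hD
  set E : ℝ × ℝ × ℝ → ℝ := fun p => fderiv ℝ η p (0, 1, 0) with hE
  have hfder : ContDiff ℝ (⊤ : ℕ∞) (fderiv ℝ η) := hη.fderiv_right (by simp)
  have hDc : ContDiff ℝ (⊤ : ℕ∞) D := hfder.clm_apply contDiff_const
  have hEc : ContDiff ℝ (⊤ : ℕ∞) E := hfder.clm_apply contDiff_const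
  have hDd : Differentiable ℝ D := hDc.differentiable (by simp)
  have hEd : Differentiable ℝ E := hEc.differentiable (by simp)
  -- differentiable lines
  have hlS : ∀ (t u : ℝ), Differentiable ℝ (fun s' : ℝ => ((s', t, u) : ℝ × ℝ × ℝ)) :=
    fun t u => differentiable_id.prodMk (differentiable_const (t, u))
  have hlT : ∀ (s u : ℝ), Differentiable ℝ (fun t' : ℝ => ((s, t', u) : ℝ × ℝ × ℝ)) :=
    fun s u => (differentiable_const s).prodMk (differentiable_id.prodMk (differentiable_const u))
  have hlU : ∀ (s t : ℝ), Differentiable ℝ (fun u' : ℝ => ((s, t, u') : ℝ × ℝ × ℝ)) :=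
    fun s t => (differentiable_const s).prodMk ((differentiable_const t).prodMk differentiable_id)
  have hcu : ∀ (s t u : ℝ), HasDerivAt (fun u' => (s, t, u')) ((0, 0, 1) : ℝ × ℝ × ℝ) u := by
    intro s t u
    exact (hasDerivAt_const u s).prodMk ((hasDerivAt_const u t).prodMk (hasDerivAt_id u))
  have hct : ∀ (s t u : ℝ), HasDerivAt (fun t' => (s, t', u)) ((0, 1, 0) : ℝ × ℝ × ℝ) t := by
    intro s t u
    exact (hasDerivAt_const t s).prodMk ((hasDerivAt_id t).prodMk (hasDerivAt_const t u))
  have hdu : ∀ (s t u : ℝ), deriv (fun u' => η (s, t, u')) u = D (s, t, u) := by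
    intro s t u
    exact ((hηd (s, t, u)).hasFDerivAt.comp_hasDerivAt u (hcu s t u)).deriv
  have hdt : ∀ (s t u : ℝ), deriv (fun t' => η (s, t', u)) t = E (s, t, u) := by
    intro s t u
    exact ((hηd (s, t, u)).hasFDerivAt.comp_hasDerivAt t (hct s t u)).deriv
  -- the constant α
  set π2 : ℝ := Real.pi / 2 with hπ2
  have hπ2mem : π2 ∈ Set.Ioo (0 : ℝ) Real.pi := by
    constructor <;> [positivity; linarith [Real.pi_pos]]
  set α : ℝ := D (0, 0, π2) with hα
  -- D is constant: equal to α for u ∈ Ioo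
  have hDconst : ∀ (s t : ℝ), ∀ u ∈ Set.Ioo (0 : ℝ) Real.pi, D (s, t, u) = α := by
    intro s t u hu
    have h1 : D (s, t, u) = D (s, t, π2) := by
      apply const_of_deriv_zero_Ioo (fun u' => D (s, t, u'))
        (hDd.comp (hlU s t)) _ hu hπ2mem
      intro x hx
      have := huu s t x hx
      rwa [show (fun u' => deriv (fun u'' => η (s, t, u'')) u') = fun u' => D (s, t, u') from
        funext fun u' => hdu s t u'] at this
    have h2 : D (s, t, π2) = D (0, t, π2) := by
      have : ∀ x : ℝ, deriv (fun s' => D (s', t, π2)) x = 0 := by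
        intro x
        have := hus x t π2 hπ2mem
        rwa [show (fun s' => deriv (fun u' => η (s', t, u')) π2) = fun s' => D (s', t, π2) from
          funext fun s' => hdu s' t π2] at this
      exact is_const_of_deriv_eq_zero (f := fun s' => D (s', t, π2))
        (hDd.comp (hlS t π2)) this s 0
    have h3 : D (0, t, π2) = D (0, 0, π2) := by
      have : ∀ x : ℝ, deriv (fun t' => D (0, t', π2)) x = 0 := by
        intro x
        have := htu 0 x π2 hπ2mem
        rwa [show (fun t' => deriv (fun u' => η (0, t', u')) π2) = fun t' => D (0, t', π2) from
          funext fun t' => hdu 0 t' π2] at this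
      exact is_const_of_deriv_eq_zero (f := fun t' => D (0, t', π2))
        (hDd.comp (hlT 0 π2)) this t 0
    rw [h1, h2, h3, hα]
  -- linearity in u: η(s,t,u) - α u is constant in u on Ioo
  have hlin : ∀ (s t : ℝ), ∀ u ∈ Set.Ioo (0 : ℝ) Real.pi,
      η (s, t, u) - α * u = η (s, t, π2) - α * π2 := by
    intro s t u hu
    apply const_of_deriv_zero_Ioo (fun u' => η (s, t, u') - α * u')
      ((hηd.comp (hlU s t)).sub ((differentiable_const α).mul differentiable_id))
      _ hu hπ2mem
    intro x hx
    have h1 : HasDerivAt (fun u' => η (s, t, u')) (D (s, t, x)) x :=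
      (hηd (s, t, x)).hasFDerivAt.comp_hasDerivAt x (hcu s t x)
    have h2 : HasDerivAt (fun u' => η (s, t, u') - α * u') (D (s, t, x) - α) x := by
      simpa using h1.fun_sub ((hasDerivAt_id x).const_mul α)
    rw [h2.deriv, hDconst s t x hx, sub_self]
  -- E(s,t,π2) is independent of s
  have hEconst : ∀ (s t : ℝ), E (s, t, π2) = E (0, t, π2) := by
    intro s t
    have : ∀ x : ℝ, deriv (fun s' => E (s', t, π2)) x = 0 := by
      intro x
      have := hst x t π2 hπ2mem
      rwa [show (fun s' => deriv (fun t' => η (s', t', π2)) t) = fun s' => E (s', t, π2) from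
        funext fun s' => hdt s' t π2] at this
    exact is_const_of_deriv_eq_zero (f := fun s' => E (s', t, π2))
      (hEd.comp (hlS t π2)) this s 0
  -- separation: η(s,t,π2) - η(0,t,π2) independent of t
  have hsep : ∀ (s t : ℝ), η (s, t, π2) - η (0, t, π2) = η (s, 0, π2) - η (0, 0, π2) := by
    intro s t
    have hz : ∀ x : ℝ, deriv (fun t' => η (s, t', π2) - η (0, t', π2)) x = 0 := by
      intro x
      have h1 : HasDerivAt (fun t' => η (s, t', π2)) (E (s, x, π2)) x :=
        (hηd (s, x, π2)).hasFDerivAt.comp_hasDerivAt x (hct s x π2)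
      have h2 : HasDerivAt (fun t' => η (0, t', π2)) (E (0, x, π2)) x :=
        (hηd (0, x, π2)).hasFDerivAt.comp_hasDerivAt x (hct 0 x π2)
      rw [(h1.fun_sub h2).deriv, hEconst s x, sub_self]
    exact is_const_of_deriv_eq_zero (f := fun t' => η (s, t', π2) - η (0, t', π2))
      ((hηd.comp (hlT s π2)).sub (hηd.comp (hlT 0 π2))) hz t 0
  -- assemble
  refine ⟨α, fun s => η (s, 0, π2) - η (0, 0, π2) - α * π2, fun t => η (0, t, π2),
    ?_, ?_, ?_⟩
  · exact ((hη.comp (contDiff_id.prodMk (contDiff_const.prodMk contDiff_const))).sub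
      contDiff_const).sub contDiff_const
  · exact hη.comp (contDiff_const.prodMk (contDiff_id.prodMk contDiff_const))
  · intro s t u hu
    have h1 := hlin s t u hu
    have h2 := hsep s t
    show η (s, t, u) = α * u + (η (s, 0, π2) - η (0, 0, π2) - α * π2) + η (0, t, π2)
    linarith
end
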